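/- arXiv:1607.00517 — 9 statements merged into one kernel-verified Lean document; each statement's English description precedes it below -/
import Mathlib

section
/- Let X be a compact Hausdorff space that is the union of countably many countably tight subspaces. Then no closed subspace of X can be mapped by a continuous surjection onto the Cantor cube {0,1}^{ω₁}. -/
open Set Cardinal

/-- A topological space `Z` is countably tight if whenever a point lies in the closure
of a set `A`, it lies in the closure of a countable subset of `A`. -/
def CountablyTight (Z : Type*) [TopologicalSpace Z] : Prop :=
  ∀ (A : Set Z) (z : Z), z ∈ closure A → ∃ B ⊆ A, B.Countable ∧ z ∈ closure B

/-!
Suppose `g : X → 2^T` is continuous and onto, where `T` is a linear order of uncountable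
cofinality (such as `ω₁`) and `X = ⋃ₙ Aₙ` with every `Aₙ` countably tight. Shrink `X` to closed
sets `X ⊇ Z₁ ⊇ Z₂ ⊇ ⋯` with `Zₙ₊₁` disjoint from `Aₙ`, each still mapped onto a copy of `2^T`
by a continuous map of `X`. By compactness `⋂ Zₙ` contains a point, and it lies in no `Aₙ`.
-/

open Function Topology

section

variable {X : Type*} [TopologicalSpace X]

namespace CountablyTight

theorem of_isEmbedding {W : Type*} [TopologicalSpace W] {φ : X → W} (hφ : IsEmbedding φ)
    (hW : CountablyTight W) : CountablyTight X := by
  intro A x hx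
  have hφx : φ x ∈ closure (φ '' A) := by
    rwa [hφ.closure_eq_preimage_closure_image] at hx
  obtain ⟨B, hBA, hBc, hxB⟩ := hW _ _ hφx
  refine ⟨φ ⁻¹' B, fun a ha => ?_, hBc.preimage hφ.injective, ?_⟩
  · obtain ⟨a', ha', hφa⟩ := hBA ha
    rwa [← hφ.injective hφa]
  · rwa [hφ.closure_eq_preimage_closure_image,
      image_preimage_eq_of_subset (hBA.trans (image_subset_range φ A))]

theorem exists_countable_subset_mem_closure {Y : Set X} (hY : CountablyTight Y)
    {S : Set X} (hSY : S ⊆ Y) {y : X} (hy : y ∈ Y) (hyS : y ∈ closure S) :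
    ∃ B ⊆ S, B.Countable ∧ y ∈ closure B := by
  have hval : (⟨y, hy⟩ : Y) ∈ closure (Subtype.val ⁻¹' S) := by
    rwa [IsInducing.subtypeVal.closure_eq_preimage_closure_image,
      Subtype.image_preimage_coe, inter_eq_right.2 hSY]
  obtain ⟨B, hBS, hBc, hyB⟩ := hY _ _ hval
  exact ⟨Subtype.val '' B, image_subset_iff.2 hBS, hBc.image _,
    image_closure_subset_closure_image continuous_subtype_val ⟨_, hyB, rfl⟩⟩

theorem preimage_subtypeVal {A : Set X} (hA : CountablyTight A) (F : Set X) :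
    CountablyTight ((Subtype.val : F → X) ⁻¹' A) :=
  hA.of_isEmbedding <| (IsEmbedding.subtypeVal.of_comp_iff
    (f := fun x : ((Subtype.val : F → X) ⁻¹' A) => (⟨x.1.1, x.2⟩ : A))).1
    (IsEmbedding.subtypeVal.comp IsEmbedding.subtypeVal :
      IsEmbedding ((Subtype.val : F → X) ∘ Subtype.val))

end CountablyTight

section Cofinality

variable {T : Type*} [LinearOrder T]

theorem exists_forall_lt_of_countable (hT : ℵ₀ < Order.cof T) {s : Set T} (hs : s.Countable) :
    ∃ δ, ∀ b ∈ s, b < δ :=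
  not_isCofinal_iff.1 fun hcof => (hs.le_aleph0.trans_lt hT).not_ge (Order.cof_le hcof)

theorem nonempty_sum_sum_equiv_of_aleph0_lt_cof (hT : ℵ₀ < Order.cof T) :
    Nonempty (T ⊕ T ⊕ T ≃ T) := by
  have hinf : ℵ₀ ≤ #T := hT.le.trans (Order.cof_le_cardinalMk T)
  refine Cardinal.eq.1 ?_
  simp only [mk_sum, lift_id, add_eq_self hinf]

end Cofinality

section CantorCube

variable {T : Type*} [LinearOrder T]

def leIndicator (δ : T) : T → Bool := fun ξ => decide (ξ ≤ δ)

theorem leIndicator_injective : Injective (leIndicator : T → T → Bool) := by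
  intro δ δ' h
  have h₁ := congr_fun h δ
  have h₂ := congr_fun h δ'
  simp only [leIndicator, le_refl, decide_true] at h₁ h₂
  exact le_antisymm (decide_eq_true_iff.1 h₁.symm) (decide_eq_true_iff.1 h₂)

variable {g₀ g₁ : X → T → Bool} {Y Z : Set X}

theorem disjoint_iInter_closure_leIndicator (hT : ℵ₀ < Order.cof T) (hg₀ : Continuous g₀)
    (hY : CountablyTight Y) :
    Disjoint (⋂ δ, closure (Y ∩ g₀ ⁻¹' (leIndicator '' Ici δ))) Y := by
  refine disjoint_left.2 fun y hy hyY => ?_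
  obtain ⟨δ₀⟩ : Nonempty T := Order.cof_ne_zero_iff.1 (aleph0_pos.trans hT).ne'
  obtain ⟨B, hBW, hBc, hyB⟩ :=
    hY.exists_countable_subset_mem_closure inter_subset_left hyY (mem_iInter.1 hy δ₀)
  obtain ⟨δ, hδ⟩ := exists_forall_lt_of_countable hT
    ((hBc.image g₀).preimage leIndicator_injective)
  have hclosed : ∀ b, IsClosed {x | g₀ x δ = b} := fun b =>
    isClosed_eq ((continuous_apply δ).comp hg₀) continuous_const
  have hfalse : g₀ y δ = false := by
    refine closure_minimal (fun b hb => ?_) (hclosed false) hyB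
    obtain ⟨-, δ', -, hb'⟩ := hBW hb
    have : δ' < δ := hδ δ' (show leIndicator δ' ∈ g₀ '' B from ⟨b, hb, hb'.symm⟩)
    simp [← hb', leIndicator, this]
  have htrue : g₀ y δ = true := by
    refine closure_minimal ?_ (hclosed true) (mem_iInter.1 hy δ)
    rintro x ⟨-, δ', hδ', hx⟩
    simp [← hx, leIndicator, mem_Ici.1 hδ']
  simp [hfalse] at htrue

theorem surjOn_inter_iInter_closure_leIndicator [CompactSpace X] [Nonempty T]
    (hZ : IsClosed Z) (hg₁ : Continuous g₁)
    (hmeet : ∀ δ v, ∃ p ∈ Z ∩ Y, g₀ p = leIndicator δ ∧ g₁ p = v) :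
    SurjOn g₁ (Z ∩ ⋂ δ, closure (Y ∩ g₀ ⁻¹' (leIndicator '' Ici δ))) univ := by
  rintro v -
  choose P hPZY hP₀ hP₁ using fun δ => hmeet δ v
  have hanti : Antitone fun δ => closure (P '' Ici δ) := fun δ δ' h =>
    closure_mono (image_mono (Ici_subset_Ici.2 h))
  obtain ⟨p, hp⟩ := IsCompact.nonempty_iInter_of_directed_nonempty_isCompact_isClosed _
    hanti.directed_ge (fun δ => (nonempty_Ici.image P).closure)
    (fun _ => isClosed_closure.isCompact) (fun _ => isClosed_closure)
  have hPW : ∀ δ, P '' Ici δ ⊆ Y ∩ g₀ ⁻¹' (leIndicator '' Ici δ) := by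
    rintro δ _ ⟨δ', hδ', rfl⟩
    exact ⟨(hPZY δ').2, δ', hδ', (hP₀ δ').symm⟩
  obtain ⟨δ₀⟩ := ‹Nonempty T›
  have hp₀ : p ∈ closure (P '' Ici δ₀) := mem_iInter.1 hp δ₀
  refine ⟨p, ⟨?_, mem_iInter.2 fun δ => closure_mono (hPW δ) (mem_iInter.1 hp δ)⟩, ?_⟩
  · exact closure_minimal (image_subset_iff.2 fun δ _ => (hPZY δ).1) hZ hp₀
  · exact closure_minimal (t := {x | g₁ x = v}) (image_subset_iff.2 fun δ _ => hP₁ δ)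
      (isClosed_eq hg₁ continuous_const) hp₀

end CantorCube

def MapsOntoCantorCube (T : Type*) (Z : Set X) : Prop :=
  ∃ g : X → T → Bool, Continuous g ∧ SurjOn g Z univ

theorem MapsOntoCantorCube.nonempty {T : Type*} {Z : Set X} (h : MapsOntoCantorCube T Z) :
    Z.Nonempty := by
  obtain ⟨g, -, hg⟩ := h
  obtain ⟨p, hp, -⟩ := hg (mem_univ fun _ => false)
  exact ⟨p, hp⟩

/-- Split `2^T ≅ 2^T × 2^T × 2^T` into coordinates `(g₀, g₁, g₂)`. Either the points of `Y`
realise every pair `(leIndicator δ, v)` on `(g₀, g₁)`, and then the points of `Z` accumulating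
at every tail of such points miss `Y` by countable tightness yet still realise every value
of `g₁`; or some pair is not realised in `Y`, and fixing it leaves `g₂` free. -/
theorem MapsOntoCantorCube.exists_subset_disjoint [CompactSpace X] {T : Type*} [LinearOrder T]
    (hT : ℵ₀ < Order.cof T) {Y Z : Set X} (hY : CountablyTight Y) (hZ : IsClosed Z)
    (hZT : MapsOntoCantorCube T Z) :
    ∃ Z' ⊆ Z, IsClosed Z' ∧ MapsOntoCantorCube T Z' ∧ Disjoint Z' Y := by
  obtain ⟨e⟩ := nonempty_sum_sum_equiv_of_aleph0_lt_cof hT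
  obtain ⟨g, hg, hgZ⟩ := hZT
  have hcont : ∀ j : T → T, Continuous fun x ξ => g x (j ξ) := fun j => by fun_prop
  set g₀ : X → T → Bool := fun x ξ => g x (e (.inl ξ))
  set g₁ : X → T → Bool := fun x ξ => g x (e (.inr (.inl ξ)))
  set g₂ : X → T → Bool := fun x ξ => g x (e (.inr (.inr ξ)))
  have hsplit : ∀ z₀ z₁ z₂, ∃ p ∈ Z, g₀ p = z₀ ∧ g₁ p = z₁ ∧ g₂ p = z₂ := by
    intro z₀ z₁ z₂
    obtain ⟨p, hpZ, hp⟩ := hgZ (mem_univ fun t => Sum.elim z₀ (Sum.elim z₁ z₂) (e.symm t))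
    refine ⟨p, hpZ, ?_, ?_, ?_⟩ <;> funext ξ <;> simp [g₀, g₁, g₂, hp]
  have : Nonempty T := Order.cof_ne_zero_iff.1 (aleph0_pos.trans hT).ne'
  by_cases hmeet : ∀ δ v, ∃ p ∈ Z ∩ Y, g₀ p = leIndicator δ ∧ g₁ p = v
  · exact ⟨_, inter_subset_left, hZ.inter (isClosed_iInter fun _ => isClosed_closure),
      ⟨g₁, hcont _, surjOn_inter_iInter_closure_leIndicator hZ (hcont _) hmeet⟩,
      (disjoint_iInter_closure_leIndicator hT (hcont _) hY).mono_left inter_subset_right⟩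
  push Not at hmeet
  obtain ⟨δ, v, hmiss⟩ := hmeet
  refine ⟨Z ∩ g₀ ⁻¹' {leIndicator δ} ∩ g₁ ⁻¹' {v}, inter_subset_left.trans inter_subset_left,
    (hZ.inter (isClosed_singleton.preimage (hcont _))).inter
      (isClosed_singleton.preimage (hcont _)),
    ⟨g₂, hcont _, fun z _ => ?_⟩,
    disjoint_left.2 fun p ⟨⟨hpZ, hp₀⟩, hp₁⟩ hpY => hmiss p ⟨hpZ, hpY⟩ hp₀ hp₁⟩
  obtain ⟨p, hpZ, hp₀, hp₁, hp₂⟩ := hsplit (leIndicator δ) v z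
  exact ⟨p, ⟨⟨hpZ, hp₀⟩, hp₁⟩, hp₂⟩

theorem iUnion_ne_univ_of_forall_exists_subset_disjoint [CompactSpace X] {Y : ℕ → Set X}
    (Q : Set X → Prop) (hQ : ∀ Z, Q Z → IsClosed Z ∧ Z.Nonempty)
    (hshrink : ∀ n Z, Q Z → ∃ Z' ⊆ Z, Q Z' ∧ Disjoint Z' (Y n)) {Z₀ : Set X} (h₀ : Q Z₀) :
    ⋃ n, Y n ≠ Set.univ := by
  choose! next hnext_sub hnext_Q hnext_disj using hshrink
  let Zs : ℕ → Set X := fun n => Nat.rec Z₀ next n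
  have hZs : ∀ n, Q (Zs n) := fun n => by
    induction n with
    | zero => exact h₀
    | succ n ih => exact hnext_Q n _ ih
  obtain ⟨x, hx⟩ := IsCompact.nonempty_iInter_of_sequence_nonempty_isCompact_isClosed Zs
    (fun n => hnext_sub n _ (hZs n)) (fun n => (hQ _ (hZs n)).2)
    (hQ _ (hZs 0)).1.isCompact (fun n => (hQ _ (hZs n)).1)
  intro hcover
  obtain ⟨n, hxn⟩ := mem_iUnion.1 (hcover.symm ▸ mem_univ x)
  exact disjoint_left.1 (hnext_disj n _ (hZs n)) (mem_iInter.1 hx (n + 1)) hxn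

theorem not_surjective_of_iUnion_countablyTight_eq_univ [CompactSpace X] {T : Type*}
    [LinearOrder T] (hT : ℵ₀ < Order.cof T) {A : ℕ → Set X} (hA : ∀ n, CountablyTight (A n))
    (hcover : ⋃ n, A n = Set.univ) {g : X → T → Bool} (hg : Continuous g) : ¬ Surjective g :=
  fun hsurj => iUnion_ne_univ_of_forall_exists_subset_disjoint
    (fun Z => IsClosed Z ∧ MapsOntoCantorCube T Z) (fun _ hZ => ⟨hZ.1, hZ.2.nonempty⟩)
    (fun n _ hZ => by
      obtain ⟨Z', hZ'Z, hZ', hZ'T, hdisj⟩ := hZ.2.exists_subset_disjoint hT (hA n) hZ.1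
      exact ⟨Z', hZ'Z, ⟨hZ', hZ'T⟩, hdisj⟩)
    ⟨isClosed_univ, g, hg, hsurj.surjOn⟩ hcover

end

theorem stmt_3_general {X : Type*} [TopologicalSpace X] [CompactSpace X]
    (A : ℕ → Set X) (hct : ∀ n, CountablyTight ↥(A n)) (hcover : ⋃ n, A n = Set.univ)
    (F : Set X) (hF : IsClosed F)
    (f : ↥F → ((Cardinal.aleph 1 : Cardinal.{0}).out → Bool))
    (hf : Continuous f) :
    ¬ Function.Surjective f := by
  have : CompactSpace F := isCompact_iff_compactSpace.1 hF.isCompact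
  have hω₁ : ℵ₀ < Order.cof (Ordinal.omega.{0} 1).ToType := by
    rw [Ordinal.cof_toType, Cardinal.cof_omega_one]
    exact aleph0_lt_aleph_one
  obtain ⟨e⟩ :
      Nonempty ((Ordinal.omega.{0} 1).ToType ≃ (Cardinal.aleph 1 : Cardinal.{0}).out) := by
    rw [← Cardinal.eq, mk_toType, Ordinal.card_omega, mk_out]
  intro hsurj
  refine not_surjective_of_iUnion_countablyTight_eq_univ hω₁
    (fun n => (hct n).preimage_subtypeVal F)
    (by rw [← preimage_iUnion, hcover, preimage_univ]) (g := fun x ξ => f x (e ξ))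
    (by fun_prop) fun z => ?_
  obtain ⟨x, hx⟩ := hsurj (z ∘ e.symm)
  exact ⟨x, by funext ξ; simp [hx]⟩

theorem stmt_3 {X : Type*} [TopologicalSpace X] [CompactSpace X] [T2Space X]
    (A : ℕ → Set X) (hct : ∀ n, CountablyTight ↥(A n)) (hcover : ⋃ n, A n = Set.univ)
    (F : Set X) (hF : IsClosed F)
    (f : ↥F → ((Cardinal.aleph 1 : Cardinal.{0}).out → Bool))
    (hf : Continuous f) :
    ¬ Function.Surjective f :=
  stmt_3_general A hct hcover F hF f hf
end

section
/- Let X be a Lindelöf regular space with two covers 𝒴 and ℋ such that: (1) |𝒴| ≤ 𝔠, every Y ∈ 𝒴 is countably tight, and X = ⋃{cl(A) : A ⊆ Y, |A| ≤ 𝔠} for every Y ∈ 𝒴; (2) every H ∈ ℋ is a nonempty closed Gδ subset of X with weight w(H) ≤ 𝔠; (3) for every set D ⊆ X with |D| ≤ 𝔠 the closure cl(D) has weight w(cl(D)) ≤ 𝔠. Then w(X) ≤ 𝔠. -/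
/-!
Close off a set `D` with `#D ≤ 𝔠` under operations indexed by the countable `B ⊆ D`
(ω₁ stages suffice because `𝔠 ^ ℵ₀ = 𝔠`): for `Y ∈ 𝒴` and `d ∈ D` add a small `A ⊆ Y` with
`d ∈ cl A`; add small dense subsets of the members of `ℋ` needed to cover `cl B` (few suffice,
since `w(cl B) ≤ 𝔠` and the members are `Gδ`); and for every countable family `𝒰` of the open
sets cutting out these `Gδ`s that does not cover `X`, add a point outside `⋃ 𝒰`.
By tightness every point of `cl D` lies in `cl B` for a countable `B ⊆ D`, hence in some
`H ∈ ℋ` with `H ⊆ cl D`. If `p ∉ cl D`, countably many of the open sets that contain such an `H`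
and miss `p` cover the Lindelöf set `cl D`; the point added for this family lies in `D` but
outside them. So `D` is dense and `w(X) = w(cl D) ≤ 𝔠`.
-/

open Set Cardinal

/-- The weight of `Z` is at most `κ`: there is a topological basis of cardinality `≤ κ`. -/
def WeightLE (Z : Type*) [TopologicalSpace Z] (κ : Cardinal) : Prop :=
  ∃ B : Set (Set Z), TopologicalSpace.IsTopologicalBasis B ∧ #B ≤ κ

universe u

open TopologicalSpace

lemma mk_biUnion_le_of_forall_le {ι α : Type u} {s : Set ι} {f : ι → Set α} {κ : Cardinal.{u}}
    (hκ : ℵ₀ ≤ κ) (hs : #s ≤ κ) (hf : ∀ i ∈ s, #(f i) ≤ κ) : #(⋃ i ∈ s, f i) ≤ κ :=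
  calc #(⋃ i ∈ s, f i) ≤ #s * ⨆ i : s, #(f i) := mk_biUnion_le f s
    _ ≤ κ * κ := mul_le_mul' hs (ciSup_le' fun i ↦ hf i.1 i.2)
    _ = κ := mul_eq_self hκ

lemma mk_union_le_of_le {α : Type u} {s t : Set α} {κ : Cardinal.{u}} (hκ : ℵ₀ ≤ κ)
    (hs : #s ≤ κ) (ht : #t ≤ κ) : #(s ∪ t : Set α) ≤ κ :=
  (mk_union_le s t).trans ((add_le_add hs ht).trans (add_eq_self hκ).le)

lemma mk_countable_subsets_le {α : Type u} {E : Set α} {κ : Cardinal.{u}} (hκ : ℵ₀ ≤ κ)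
    (hκω : κ ^ ℵ₀ ≤ κ) (hE : #E ≤ κ) : #{B : Set α | B ⊆ E ∧ B.Countable} ≤ κ := by
  simp_rw [← le_aleph0_iff_set_countable]
  calc _ ≤ max #E ℵ₀ ^ ℵ₀ := mk_bounded_subset_le E ℵ₀
    _ ≤ κ ^ ℵ₀ := power_le_power_right (max_le hE hκ)
    _ ≤ κ := hκω

def countableExtension {α β : Type*} (F : Set α → Set β) (E : Set α) : Set β :=
  ⋃ B ∈ {B : Set α | B ⊆ E ∧ B.Countable}, F B

section countableExtension

variable {α β : Type u} {F : Set α → Set β}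

lemma subset_countableExtension {B E : Set α} (hBE : B ⊆ E) (hB : B.Countable) :
    F B ⊆ countableExtension F E :=
  subset_biUnion_of_mem (u := F) (show B ∈ {B | B ⊆ E ∧ B.Countable} from ⟨hBE, hB⟩)

lemma countableExtension_mono {G : Set α → Set β} (hFG : F ≤ G) (E : Set α) :
    countableExtension F E ⊆ countableExtension G E :=
  iUnion₂_mono fun B _ ↦ hFG B

lemma countableExtension_subset_iff {E : Set α} {D : Set β} :
    countableExtension F E ⊆ D ↔ ∀ B ⊆ E, B.Countable → F B ⊆ D := by
  simp [countableExtension, and_imp]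

lemma mk_countableExtension_le {E : Set α} {κ : Cardinal.{u}} (hκ : ℵ₀ ≤ κ)
    (hκω : κ ^ ℵ₀ ≤ κ) (hE : #E ≤ κ) (hF : ∀ B : Set α, B.Countable → #(F B) ≤ κ) :
    #(countableExtension F E) ≤ κ :=
  mk_biUnion_le_of_forall_le hκ (mk_countable_subsets_le hκ hκω hE) fun B hB ↦ hF B hB.2

lemma exists_countable_subset_countableExtension {E : Set α} {𝒰 : Set β} (h𝒰 : 𝒰.Countable)
    (h𝒰E : 𝒰 ⊆ countableExtension F E) :
    ∃ B ⊆ E, B.Countable ∧ 𝒰 ⊆ countableExtension F B := by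
  have : ∀ O ∈ 𝒰, ∃ B, (B ⊆ E ∧ B.Countable) ∧ O ∈ F B := fun O hO ↦ by
    simpa [countableExtension] using h𝒰E hO
  choose! B hB hOB using this
  refine ⟨⋃ O ∈ 𝒰, B O, iUnion₂_subset fun O hO ↦ (hB O hO).1,
    h𝒰.biUnion fun O hO ↦ (hB O hO).2, fun O hO ↦ ?_⟩
  exact subset_countableExtension (subset_biUnion_of_mem hO) (hB O hO).2 (hOB O hO)

end countableExtension

open Ordinal in
theorem exists_card_le_countableExtension_subset {α : Type u} {κ : Cardinal.{u}} (hκ : ℵ₁ ≤ κ)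
    (hκω : κ ^ ℵ₀ ≤ κ) (Φ : Set α → Set α) (hΦ : ∀ B : Set α, B.Countable → #(Φ B) ≤ κ) :
    ∃ D : Set α, #D ≤ κ ∧ countableExtension Φ D ⊆ D := by
  have hκ₀ : ℵ₀ ≤ κ := (aleph0_le_aleph 1).trans hκ
  let S : Ordinal.{u} → Set α :=
    fun o ↦ transfiniteIterate (fun E ↦ E ∪ countableExtension Φ E) o ∅
  have hS_mono : Monotone S := monotone_transfiniteIterate _ _ fun _ ↦ subset_union_left
  have hS_card : ∀ o < ω₁, #(S o) ≤ κ := by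
    intro o
    induction o using SuccOrder.limitRecOn with
    | isMin o ho =>
      intro _
      simp only [S, ho.eq_bot, transfiniteIterate_bot, mk_eq_zero, zero_le]
    | succ o ho ih =>
      intro ho'
      simp only [S, transfiniteIterate_succ _ _ _ ho]
      have := ih ((Order.lt_succ_of_not_isMax ho).trans ho')
      exact mk_union_le_of_le hκ₀ this (mk_countableExtension_le hκ₀ hκω this hΦ)
    | isSuccLimit o ho ih =>
      intro hoω
      simp only [S, transfiniteIterate_limit _ _ _ ho, iSup_eq_iUnion, iUnion_subtype, mem_Iio]
      exact mk_biUnion_le_of_le ((lt_omega_iff_card_lt.1 hoω).le.trans hκ) hκ₀ _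
        fun p hp ↦ ih p hp (hp.trans hoω)
  refine ⟨⋃ o < ω₁, S o, mk_biUnion_le_of_le (card_omega 1 ▸ hκ) hκ₀ _ hS_card,
    countableExtension_subset_iff.2 fun B hB hBc ↦ ?_⟩
  choose o ho hbo using fun b : B ↦ mem_iUnion₂.1 (hB b.2)
  have : Countable B := hBc.to_subtype
  have hσ : ⨆ b, o b < ω₁ := iSup_lt_omega_one ho
  have hBS : B ⊆ S (⨆ b, o b) := fun b hb ↦ hS_mono (Ordinal.le_iSup o ⟨b, hb⟩) (hbo ⟨b, hb⟩)
  have hsucc : Φ B ⊆ S (Order.succ (⨆ b, o b)) := by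
    simp only [S, transfiniteIterate_succ _ _ _ (not_isMax _)]
    exact subset_union_of_subset_right (subset_countableExtension hBS hBc) _
  exact hsucc.trans (subset_biUnion_of_mem (u := S) ((isSuccLimit_omega 1).succ_lt hσ))

lemma WeightLE.of_homeomorph {Z W : Type u} [TopologicalSpace Z] [TopologicalSpace W]
    {κ : Cardinal.{u}} (h : WeightLE Z κ) (e : Z ≃ₜ W) : WeightLE W κ := by
  obtain ⟨ℬ, hℬ, hℬcard⟩ := h
  exact ⟨preimage e.symm '' ℬ, hℬ.isInducing e.symm.isInducing, mk_image_le.trans hℬcard⟩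

lemma WeightLE.exists_dense {Z : Type u} [TopologicalSpace Z] {κ : Cardinal.{u}}
    (h : WeightLE Z κ) : ∃ s : Set Z, Dense s ∧ #s ≤ κ := by
  obtain ⟨ℬ, hℬ, hℬcard⟩ := h
  refine ⟨range fun b : {b | b ∈ ℬ ∧ b.Nonempty} ↦ b.2.2.some, ?_, ?_⟩
  · exact hℬ.dense_iff.2 fun b hb hne ↦ ⟨hne.some, hne.some_mem, ⟨b, hb, hne⟩, rfl⟩
  · exact mk_range_le.trans ((mk_le_mk_of_subset (sep_subset _ _)).trans hℬcard)

lemma WeightLE.exists_card_le_subset_closure {X : Type u} [TopologicalSpace X] {H : Set X}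
    {κ : Cardinal.{u}} (h : WeightLE H κ) : ∃ S : Set X, #S ≤ κ ∧ H ⊆ closure S := by
  obtain ⟨s, hs, hscard⟩ := h.exists_dense
  exact ⟨Subtype.val '' s, mk_image_le.trans hscard, Subtype.dense_iff.1 hs⟩

lemma CountablyTight.exists_countable_subset_mem_closure_s6 {X : Type u} [TopologicalSpace X]
    {Y A : Set X} (hY : CountablyTight Y) (hAY : A ⊆ Y) {y : X} (hy : y ∈ Y)
    (hyA : y ∈ closure A) : ∃ B ⊆ A, B.Countable ∧ y ∈ closure B := by
  have : (⟨y, hy⟩ : Y) ∈ closure (Subtype.val ⁻¹' A) := by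
    rwa [closure_subtype, Subtype.image_preimage_coe, inter_eq_right.2 hAY]
  obtain ⟨B, hBA, hBc, hyB⟩ := hY _ _ this
  exact ⟨Subtype.val '' B, (image_mono hBA).trans (image_preimage_subset _ _), hBc.image _,
    closure_subtype.1 hyB⟩

lemma exists_subset_card_le_subset_sUnion_of_weightLE {X : Type u} [TopologicalSpace X] {K : Set X}
    {κ : Cardinal.{u}} (hκω : κ ^ ℵ₀ ≤ κ) (hK : WeightLE K κ) {ℋ : Set (Set X)}
    (hℋ : ∀ H ∈ ℋ, IsGδ H) (hKℋ : K ⊆ ⋃₀ ℋ) : ∃ 𝒦 ⊆ ℋ, #𝒦 ≤ κ ∧ K ⊆ ⋃₀ 𝒦 := by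
  -- Each `x ∈ K ∩ H` lies in `⋂ n, f n ⊆ H` for basic sets `f n` inside the open sets cutting
  -- out `H`; one member of `ℋ` per such sequence `f` suffices, and there are `≤ κ ^ ℵ₀` of them.
  obtain ⟨ℬ, hℬ, hℬcard⟩ := hK
  choose! U hUopen hUeq using fun H hH ↦ isGδ_iff_eq_iInter_nat.1 (hℋ H hH)
  let F := {f : ℕ → ℬ | ∃ H ∈ ℋ, ⋂ n, (f n : Set K) ⊆ Subtype.val ⁻¹' H}
  choose G hGℋ hG using fun f : F ↦ f.2
  refine ⟨range G, range_subset_iff.2 hGℋ, ?_, fun x hx ↦ ?_⟩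
  · calc #(range G) ≤ #(ℕ → ℬ) := mk_range_le.trans (mk_set_le F)
      _ = #ℬ ^ ℵ₀ := by simp
      _ ≤ κ := (power_le_power_right hℬcard).trans hκω
  · obtain ⟨H, hH, hxH⟩ := hKℋ hx
    have hxU : ∀ n, (⟨x, hx⟩ : K) ∈ Subtype.val ⁻¹' U H n := fun n ↦
      (hUeq H hH ▸ hxH : x ∈ ⋂ n, U H n) |> mem_iInter.1 <| n
    choose b hbℬ hxb hbU using fun n ↦
      hℬ.exists_subset_of_mem_open (hxU n) ((hUopen H hH n).preimage continuous_subtype_val)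
    have hf : (fun n ↦ (⟨b n, hbℬ n⟩ : ℬ)) ∈ F := by
      refine ⟨H, hH, fun z hz ↦ ?_⟩
      rw [mem_preimage, hUeq H hH, mem_iInter]
      exact fun n ↦ hbU n (mem_iInter.1 hz n)
    exact ⟨G ⟨_, hf⟩, mem_range_self _, hG ⟨_, hf⟩ (mem_iInter.2 hxb)⟩

section Escape

variable {X : Type u}

open Classical in
def escapePoints (𝒮 : Set (Set X)) : Set X :=
  countableExtension (fun 𝒰 ↦ if h : (⋃₀ 𝒰)ᶜ.Nonempty then {h.some} else ∅) 𝒮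

lemma mk_escapePoints_le {𝒮 : Set (Set X)} {κ : Cardinal.{u}} (hκ : ℵ₀ ≤ κ)
    (hκω : κ ^ ℵ₀ ≤ κ) (h𝒮 : #𝒮 ≤ κ) : #(escapePoints 𝒮) ≤ κ :=
  mk_countableExtension_le hκ hκω h𝒮 fun 𝒰 _ ↦ by
    split
    · exact (mk_singleton _).trans_le (one_le_aleph0.trans hκ)
    · simp

lemma sUnion_eq_univ_of_escapePoints_subset {𝒮 𝒰 : Set (Set X)} {D : Set X}
    (hD : escapePoints 𝒮 ⊆ D) (h𝒰 : 𝒰 ⊆ 𝒮) (h𝒰c : 𝒰.Countable) (hD𝒰 : D ⊆ ⋃₀ 𝒰) :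
    ⋃₀ 𝒰 = Set.univ := by
  by_contra hne
  have h := nonempty_compl.2 hne
  have : h.some ∈ escapePoints 𝒮 := subset_countableExtension h𝒰 h𝒰c (by simp [dif_pos h])
  exact h.some_mem (hD𝒰 (hD this))

end Escape

theorem dense_of_forall_countable_subcover {X : Type u} [TopologicalSpace X] [LindelofSpace X]
    {D : Set X} {𝒪 : Set (Set X)} (h𝒪 : ∀ O ∈ 𝒪, IsOpen O)
    (hsep : ∀ y ∈ closure D, ∀ p ∉ closure D, ∃ O ∈ 𝒪, y ∈ O ∧ p ∉ O)
    (hcover : ∀ 𝒰 ⊆ 𝒪, 𝒰.Countable → D ⊆ ⋃₀ 𝒰 → ⋃₀ 𝒰 = Set.univ) : Dense D := by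
  refine dense_iff_closure_eq.2 (eq_univ_of_forall fun p ↦ ?_)
  by_contra hp
  choose! O hO𝒪 hyO hpO using fun y hy ↦ hsep y hy p hp
  obtain ⟨t, htc, htD, hDt⟩ := isClosed_closure.isLindelof.elim_nhds_subcover O
    fun y hy ↦ (h𝒪 _ (hO𝒪 y hy)).mem_nhds (hyO y hy)
  have hcov : ⋃₀ (O '' t) = Set.univ :=
    hcover _ (image_subset_iff.2 fun y hy ↦ hO𝒪 y (htD y hy)) (htc.image O)
      (subset_closure.trans (by rwa [sUnion_image]))
  obtain ⟨_, ⟨y, hy, rfl⟩, hpy⟩ := hcov.symm ▸ mem_univ p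
  exact hpO y (htD y hy) hpy

theorem exists_operator_mem_closure_countable {X : Type u} [TopologicalSpace X]
    {𝒴 : Set (Set X)} {κ : Cardinal.{u}} (hκ : ℵ₀ ≤ κ) (h𝒴card : #𝒴 ≤ κ)
    (h𝒴cover : ⋃₀ 𝒴 = Set.univ) (h𝒴ct : ∀ Y ∈ 𝒴, CountablyTight Y)
    (h𝒴big : ∀ Y ∈ 𝒴, ∀ x : X, ∃ A ⊆ Y, #A ≤ κ ∧ x ∈ closure A) :
    ∃ Φ : Set X → Set X, (∀ B : Set X, B.Countable → #(Φ B) ≤ κ) ∧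
      ∀ D, countableExtension Φ D ⊆ D → ∀ y ∈ closure D, ∃ B ⊆ D, B.Countable ∧ y ∈ closure B := by
  choose! A hAY hAcard hxA using h𝒴big
  refine ⟨fun B ↦ ⋃ Y ∈ 𝒴, ⋃ d ∈ B, A Y d, fun B hB ↦ ?_, fun D hD y hy ↦ ?_⟩
  · exact mk_biUnion_le_of_forall_le hκ h𝒴card fun Y hY ↦ mk_biUnion_le_of_forall_le hκ
      ((le_aleph0_iff_set_countable.2 hB).trans hκ) fun d _ ↦ hAcard Y hY d
  obtain ⟨Y, hY, hyY⟩ : ∃ Y ∈ 𝒴, y ∈ Y := mem_sUnion.1 (h𝒴cover.symm ▸ mem_univ y)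
  have hDY : D ⊆ closure (D ∩ Y) := fun d hd ↦ by
    have hAD : A Y d ⊆ D := fun x hx ↦ countableExtension_subset_iff.1 hD {d}
      (singleton_subset_iff.2 hd) (countable_singleton d) (mem_biUnion hY (mem_biUnion rfl hx))
    exact closure_mono (subset_inter hAD (hAY Y hY d)) (hxA Y hY d)
  obtain ⟨B, hB, hBc, hyB⟩ := (h𝒴ct Y hY).exists_countable_subset_mem_closure_s6
    inter_subset_right hyY (closure_minimal hDY isClosed_closure hy)
  exact ⟨B, hB.trans inter_subset_left, hBc, hyB⟩

theorem exists_operator_dense {X : Type u} [TopologicalSpace X] [LindelofSpace X]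
    {ℋ : Set (Set X)} {κ : Cardinal.{u}} (hκ : ℵ₀ ≤ κ) (hκω : κ ^ ℵ₀ ≤ κ)
    (hℋcover : ⋃₀ ℋ = Set.univ) (hℋ : ∀ H ∈ ℋ, IsGδ H ∧ WeightLE H κ)
    (hcl : ∀ B : Set X, B.Countable → WeightLE (closure B) κ) :
    ∃ Φ : Set X → Set X, (∀ B : Set X, B.Countable → #(Φ B) ≤ κ) ∧
      ∀ D, countableExtension Φ D ⊆ D →
        (∀ y ∈ closure D, ∃ B ⊆ D, B.Countable ∧ y ∈ closure B) → Dense D := by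
  choose! S hScard hHS using fun H hH ↦ (hℋ H hH).2.exists_card_le_subset_closure
  choose! T hTopen hTcount hHT using fun H hH ↦ (hℋ H hH).1
  choose! 𝒦 h𝒦ℋ h𝒦card h𝒦cover using fun B (hB : B.Countable) ↦
    exists_subset_card_le_subset_sUnion_of_weightLE hκω (hcl B hB) (fun H hH ↦ (hℋ H hH).1)
      (hℋcover ▸ subset_univ _)
  let 𝒪 : Set X → Set (Set X) := countableExtension fun B ↦ ⋃ H ∈ 𝒦 B, T H
  refine ⟨fun B ↦ (⋃ H ∈ 𝒦 B, S H) ∪ escapePoints (𝒪 B), fun B hB ↦ ?_, fun D hD hDB ↦ ?_⟩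
  · have h𝒪 : #(𝒪 B) ≤ κ := mk_countableExtension_le hκ hκω
      ((le_aleph0_iff_set_countable.2 hB).trans hκ) fun B' hB' ↦ mk_biUnion_le_of_forall_le hκ
        (h𝒦card B' hB') fun H hH ↦ ((hTcount H (h𝒦ℋ B' hB' hH)).le_aleph0).trans hκ
    exact mk_union_le_of_le hκ (mk_biUnion_le_of_forall_le hκ (h𝒦card B hB)
      fun H hH ↦ hScard H (h𝒦ℋ B hB hH)) (mk_escapePoints_le hκ hκω h𝒪)
  rw [countableExtension_subset_iff] at hD
  refine dense_of_forall_countable_subcover (𝒪 := 𝒪 D) ?_ (fun y hy p hp ↦ ?_) fun 𝒰 h𝒰 h𝒰c hD𝒰 ↦ ?_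
  · intro O hO
    simp only [𝒪, countableExtension, mem_iUnion] at hO
    obtain ⟨B, ⟨-, hBc⟩, H, hH, hO⟩ := hO
    exact hTopen H (h𝒦ℋ B hBc hH) O hO
  · obtain ⟨B, hBD, hBc, hyB⟩ := hDB y hy
    obtain ⟨H, hH, hyH⟩ := h𝒦cover B hBc hyB
    have hHD : H ⊆ closure D := (hHS H (h𝒦ℋ B hBc hH)).trans
      (closure_mono ((subset_biUnion_of_mem hH).trans (subset_union_left.trans (hD B hBD hBc))))
    have hpH : p ∉ ⋂₀ T H := hHT H (h𝒦ℋ B hBc hH) ▸ fun h ↦ hp (hHD h)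
    obtain ⟨O, hO, hpO⟩ : ∃ O ∈ T H, p ∉ O := by simpa [mem_sInter] using hpH
    exact ⟨O, subset_countableExtension hBD hBc (mem_biUnion hH hO),
      (hHT H (h𝒦ℋ B hBc hH) ▸ hyH : y ∈ ⋂₀ T H) O hO, hpO⟩
  · obtain ⟨B, hBD, hBc, h𝒰B⟩ := exists_countable_subset_countableExtension h𝒰c h𝒰
    exact sUnion_eq_univ_of_escapePoints_subset (subset_union_right.trans (hD B hBD hBc))
      h𝒰B h𝒰c hD𝒰

theorem stmt_6_general {X : Type u} [TopologicalSpace X] [LindelofSpace X]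
    (𝒴 ℋ : Set (Set X))
    -- (1)
    (h𝒴card : #𝒴 ≤ continuum)
    (h𝒴cover : ⋃₀ 𝒴 = Set.univ)
    (h𝒴ct : ∀ Y ∈ 𝒴, CountablyTight ↥Y)
    (h𝒴big : ∀ Y ∈ 𝒴, ∀ x : X, ∃ A ⊆ Y, #A ≤ continuum ∧ x ∈ closure A)
    -- (2)
    (hℋcover : ⋃₀ ℋ = Set.univ)
    (hℋ : ∀ H ∈ ℋ, H.Nonempty ∧ IsClosed H ∧ IsGδ H ∧ WeightLE ↥H continuum)
    -- (3)
    (hcl : ∀ D : Set X, #D ≤ continuum → WeightLE ↥(closure D) continuum) :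
    WeightLE X continuum := by
  obtain ⟨Φ₁, hΦ₁card, hΦ₁⟩ :=
    exists_operator_mem_closure_countable aleph0_le_continuum h𝒴card h𝒴cover h𝒴ct h𝒴big
  obtain ⟨Φ₂, hΦ₂card, hΦ₂⟩ := exists_operator_dense aleph0_le_continuum
    continuum_power_aleph0.le hℋcover (fun H hH ↦ ⟨(hℋ H hH).2.2.1, (hℋ H hH).2.2.2⟩)
    fun B hB ↦ hcl B ((le_aleph0_iff_set_countable.2 hB).trans aleph0_le_continuum)
  obtain ⟨D, hDcard, hD⟩ := exists_card_le_countableExtension_subset aleph_one_le_continuum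
    continuum_power_aleph0.le (Φ₁ ⊔ Φ₂)
      fun B hB ↦ mk_union_le_of_le aleph0_le_continuum (hΦ₁card B hB) (hΦ₂card B hB)
  have hΦ₁D := (countableExtension_mono le_sup_left D).trans hD
  have hΦ₂D := (countableExtension_mono le_sup_right D).trans hD
  have hw := hcl D hDcard
  rw [(hΦ₂ D hΦ₂D (hΦ₁ D hΦ₁D)).closure_eq] at hw
  exact hw.of_homeomorph (Homeomorph.Set.univ X)

theorem stmt_6 {X : Type u} [TopologicalSpace X] [LindelofSpace X] [RegularSpace X]
    (𝒴 ℋ : Set (Set X))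
    -- (1)
    (h𝒴card : #𝒴 ≤ continuum)
    (h𝒴cover : ⋃₀ 𝒴 = Set.univ)
    (h𝒴ct : ∀ Y ∈ 𝒴, CountablyTight ↥Y)
    (h𝒴big : ∀ Y ∈ 𝒴, ∀ x : X, ∃ A ⊆ Y, #A ≤ continuum ∧ x ∈ closure A)
    -- (2)
    (hℋcover : ⋃₀ ℋ = Set.univ)
    (hℋ : ∀ H ∈ ℋ, H.Nonempty ∧ IsClosed H ∧ IsGδ H ∧ WeightLE ↥H continuum)
    -- (3)
    (hcl : ∀ D : Set X, #D ≤ continuum → WeightLE ↥(closure D) continuum) :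
    WeightLE X continuum :=
  stmt_6_general 𝒴 ℋ h𝒴card h𝒴cover h𝒴ct h𝒴big hℋcover hℋ hcl
end

section
/- Let X be a regular space with a cover 𝒴 such that |𝒴| ≤ 𝔠, every Y ∈ 𝒴 is countably tight, and X = ⋃{cl(A) : A ⊆ Y, |A| ≤ 𝔠} for every Y ∈ 𝒴. Then for every set D ⊆ X with |D| ≤ 𝔠, the closure cl(D) has network weight nw(cl(D)) ≤ 𝔠. -/
open Set Cardinal

/-- The network weight of `Z` is at most `κ`: there is a network of cardinality `≤ κ`. -/
def NetworkWeightLE (Z : Type*) [TopologicalSpace Z] (κ : Cardinal) : Prop :=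
  ∃ 𝒩 : Set (Set Z), #𝒩 ≤ κ ∧
    ∀ (z : Z) (U : Set Z), IsOpen U → z ∈ U → ∃ N ∈ 𝒩, z ∈ N ∧ N ⊆ U

theorem stmt_9 {X : Type u} [TopologicalSpace X] [RegularSpace X]
    (𝒴 : Set (Set X))
    (h𝒴card : #𝒴 ≤ continuum)
    (h𝒴cover : ⋃₀ 𝒴 = Set.univ)
    (h𝒴ct : ∀ Y ∈ 𝒴, CountablyTight ↥Y)
    (h𝒴big : ∀ Y ∈ 𝒴, ∀ x : X, ∃ A ⊆ Y, #A ≤ continuum ∧ x ∈ closure A)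
    (D : Set X) (hD : #D ≤ continuum) :
    NetworkWeightLE ↥(closure D) continuum := by
  classical
  choose A hAsub hAcard hAcl using h𝒴big
  -- For each Y ∈ 𝒴, the trace set E Y ⊆ Y with D ⊆ closure (E Y)
  set EY : 𝒴 → Set X := fun Y => ⋃ d : D, A Y.1 Y.2 d.1 with hEYdef
  have hEYsub : ∀ Y : 𝒴, EY Y ⊆ Y.1 := fun Y =>
    iUnion_subset fun d => hAsub Y.1 Y.2 d.1
  have hEYcard : ∀ Y : 𝒴, #(EY Y) ≤ continuum := by
    intro Y
    refine (mk_iUnion_le _).trans ?_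
    have h1 : ⨆ d : D, #(A Y.1 Y.2 d.1) ≤ continuum :=
      ciSup_le' fun d => hAcard Y.1 Y.2 d.1
    calc #D * ⨆ d : D, #(A Y.1 Y.2 d.1) ≤ continuum * continuum :=
          mul_le_mul' hD h1
      _ = continuum := mul_eq_self aleph0_le_continuum
  set E : Set X := ⋃ Y : 𝒴, EY Y with hEdef
  have hEcard : #E ≤ continuum := by
    refine (mk_iUnion_le _).trans ?_
    calc #𝒴 * ⨆ Y : 𝒴, #(EY Y) ≤ continuum * continuum :=
          mul_le_mul' h𝒴card (ciSup_le' hEYcard)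
      _ = continuum := mul_eq_self aleph0_le_continuum
  -- the network
  set F : (ℕ → ↥E) → Set ↥(closure D) :=
    fun f => Subtype.val ⁻¹' (closure (Set.range fun n => (f n : X))) with hFdef
  refine ⟨Set.range F, ?_, ?_⟩
  · refine (mk_range_le).trans ?_
    rw [Cardinal.mk_arrow]
    simp only [Cardinal.lift_uzero, Cardinal.mk_nat, Cardinal.lift_aleph0]
    calc (#E) ^ (ℵ₀ : Cardinal) ≤ continuum ^ (ℵ₀ : Cardinal) :=
          power_le_power_right hEcard
      _ = continuum := continuum_power_aleph0
  · rintro z U hU hzU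
    rw [isOpen_induced_iff] at hU
    obtain ⟨V, hV, rfl⟩ := hU
    have hzV : (z : X) ∈ V := hzU
    -- point z lies in some Y ∈ 𝒴
    have hzY : (z : X) ∈ ⋃₀ 𝒴 := h𝒴cover ▸ mem_univ _
    obtain ⟨Y, hY, hzYm⟩ := hzY
    -- regularity: open W with z ∈ W, closure W ⊆ V
    obtain ⟨t, ht, htc, hts⟩ := exists_mem_nhds_isClosed_subset (hV.mem_nhds hzV)
    obtain ⟨W, hWt, hW, hzW⟩ := mem_nhds_iff.mp ht
    have hclW : closure W ⊆ V := (closure_minimal hWt htc).trans hts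
    -- z ∈ closure (EY ∩ W)
    set S : Set X := EY ⟨Y, hY⟩ ∩ W with hSdef
    have hzS : (z : X) ∈ closure S := by
      have h1 : (z : X) ∈ closure (W ∩ D) := hW.inter_closure ⟨hzW, z.2⟩
      have h2 : W ∩ D ⊆ closure S := by
        rintro d ⟨hdW, hdD⟩
        have : d ∈ closure (W ∩ A Y hY d) :=
          hW.inter_closure ⟨hdW, hAcl Y hY d⟩
        refine closure_mono ?_ this
        rintro x ⟨hxW, hxA⟩
        exact ⟨mem_iUnion.mpr ⟨⟨d, hdD⟩, hxA⟩, hxW⟩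
      have h3 := closure_mono h2 h1
      rwa [closure_closure] at h3
    -- countable tightness inside Y
    have hSY : S ⊆ Y := fun x hx => hEYsub ⟨Y, hY⟩ hx.1
    have hz' : (⟨(z : X), hzYm⟩ : ↥Y) ∈ closure (Subtype.val ⁻¹' S) := by
      rw [closure_subtype]
      have : Subtype.val '' (Subtype.val ⁻¹' S : Set ↥Y) = S := by
        rw [Subtype.image_preimage_coe]
        exact inter_eq_self_of_subset_right hSY
      rw [this]
      exact hzS
    obtain ⟨B', hB'sub, hB'count, hzB'⟩ := h𝒴ct Y hY (Subtype.val ⁻¹' S) _ hz'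
    set B : Set X := Subtype.val '' B' with hBdef
    have hBS : B ⊆ S := by
      rintro x ⟨b, hb, rfl⟩
      exact hB'sub hb
    have hBcount : B.Countable := hB'count.image _
    have hzB : (z : X) ∈ closure B := by
      have h4 := map_mem_closure continuous_subtype_val hzB' (mapsTo_image Subtype.val B')
      exact h4
    have hBne : B.Nonempty := by
      rcases B.eq_empty_or_nonempty with h | h
      · rw [h, closure_empty] at hzB; exact absurd hzB (notMem_empty _)
      · exact h
    obtain ⟨f, hf⟩ := hBcount.exists_eq_range hBne
    have hfE : ∀ n, f n ∈ E := by
      intro n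
      have : f n ∈ B := hf ▸ mem_range_self n
      exact mem_iUnion.mpr ⟨⟨Y, hY⟩, (hBS this).1⟩
    refine ⟨F (fun n => ⟨f n, hfE n⟩), mem_range_self _, ?_, ?_⟩
    · show (z : X) ∈ closure (Set.range fun n => f n)
      rwa [← hf]
    · intro w hw
      have hwB : (w : X) ∈ closure B := by
        have : (w : X) ∈ closure (Set.range fun n => f n) := hw
        rwa [← hf] at this
      have : (w : X) ∈ V := hclW (closure_mono (fun x hx => (hBS hx).2) hwB)
      exact this
end

section
/- Let X and Y be topological spaces and let S be a nowhere dense weak P subset of X. Then no dense countably tight subset A of the product X × Y intersects S × Y; that is, if A ⊆ X × Y is dense in X × Y and the subspace A is countably tight, then A ∩ (S × Y) = ∅. -/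
open Set

/-- A nonempty subset `S` of a space is a weak P set if the closure of every
countable subset of its complement is disjoint from `S`. -/
def IsWeakPSet {Z : Type*} [TopologicalSpace Z] (S : Set Z) : Prop :=
  S.Nonempty ∧ ∀ T : Set Z, T ⊆ Sᶜ → T.Countable → closure T ∩ S = ∅

/-!
A point `a ∈ A` over `S` lies in the closure of the dense set of points of `A` lying over
`(closure S)ᶜ`. By countable tightness of `A` it lies in the closure of countably many of
them, so its first coordinate lies in the closure of a countable subset of `Sᶜ`, which the
weak P property forbids.
-/

theorem IsWeakPSet.preimage_eq_empty {X Z : Type*} [TopologicalSpace X] [TopologicalSpace Z]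
    {S : Set X} (hS : IsWeakPSet S) (hZ : CountablyTight Z) {f : Z → X} (hf : Continuous f)
    (hdense : Dense (f ⁻¹' Sᶜ)) : f ⁻¹' S = ∅ := by
  refine eq_empty_of_forall_notMem fun z hzS => ?_
  obtain ⟨B, hBS, hBcount, hzB⟩ := hZ _ z (hdense z)
  have hfzB : f z ∈ closure (f '' B) := map_mem_closure hf hzB (mapsTo_image f B)
  have hdisj := hS.2 (f '' B) (image_subset_iff.2 hBS) (hBcount.image f)
  exact hdisj.subset ⟨hfzB, hzS⟩

theorem Dense.preimage_val_of_isOpen {Z : Type*} [TopologicalSpace Z] {A U : Set Z}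
    (hA : Dense A) (hU : Dense U) (hUopen : IsOpen U) : Dense ((↑) ⁻¹' U : Set A) := by
  rw [Subtype.dense_iff, Subtype.image_preimage_coe,
    (hA.inter_of_isOpen_right hU hUopen).closure_eq]
  exact subset_univ A

theorem stmt_13 {X Y : Type*} [TopologicalSpace X] [TopologicalSpace Y]
    (S : Set X) (hnwd : IsNowhereDense S) (hwp : IsWeakPSet S)
    (A : Set (X × Y)) (hdense : Dense A) (hct : CountablyTight ↥A) :
    A ∩ (S ×ˢ (univ : Set Y)) = ∅ := by
  have hU : Dense (Prod.fst ⁻¹' (closure S)ᶜ : Set (X × Y)) :=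
    (interior_eq_empty_iff_dense_compl.mp hnwd).preimage isOpenMap_fst
  have hUopen : IsOpen (Prod.fst ⁻¹' (closure S)ᶜ : Set (X × Y)) :=
    isClosed_closure.isOpen_compl.preimage continuous_fst
  have hdense' : Dense ((fun a : A => (a : X × Y).1) ⁻¹' Sᶜ) :=
    (hdense.preimage_val_of_isOpen hU hUopen).mono
      (preimage_mono (preimage_mono (compl_subset_compl.2 subset_closure)))
  have hempty := hwp.preimage_eq_empty hct (continuous_fst.comp continuous_subtype_val) hdense'
  refine eq_empty_of_forall_notMem fun p ⟨hpA, hpS, _⟩ => ?_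
  exact hempty.subset (show (⟨p, hpA⟩ : A) ∈ (fun a : A => (a : X × Y).1) ⁻¹' S from hpS)
end

section
/- Let (X_i)_{i<ω} be a sequence of topological spaces such that each X_i has a nowhere dense weak P subset S_i. Then the product X = ∏_{i<ω} X_i is not the union of countably many countably tight subspaces; in fact, for every countable collection {A_n : n < ω} of countably tight subspaces of X there is a point of X not in any A_n. -/
open Set

/-- One-step extension lemma: given a countably tight subspace `A` of the product and a
finite partial point `f↾k` with values in `V i = S i ∪ (closure (S i))ᶜ`, we can extend
it to a longer finite partial point `g↾k'` (values in `V`) such that no point extending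
`g↾k'` with all further coordinates in `V` belongs to `A`. -/
lemma pi_step (X : ℕ → Type*) [∀ i, TopologicalSpace (X i)]
    (S : ∀ i, Set (X i)) (hnwd : ∀ i, IsNowhereDense (S i))
    (hwp : ∀ i, IsWeakPSet (S i)) (s : ∀ i, X i) (hs : ∀ i, s i ∈ S i)
    (A : Set (∀ i, X i)) (hA : CountablyTight ↥A) (k : ℕ) (f : ∀ i, X i)
    (hf : ∀ i, f i ∈ S i ∪ (closure (S i))ᶜ) :
    ∃ (k' : ℕ) (g : ∀ i, X i), k + 1 ≤ k' ∧ (∀ i, g i ∈ S i ∪ (closure (S i))ᶜ) ∧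
      (∀ i, i < k → g i = f i) ∧
      A ∩ {y | (∀ i, i < k' → y i = g i) ∧
        ∀ i, k' ≤ i → y i ∈ S i ∪ (closure (S i))ᶜ} = ∅ := by
  classical
  by_contra hcon
  push_neg at hcon
  -- hcon : for every admissible extension, A meets the corresponding cylinder
  have hcon' : ∀ (k' : ℕ) (g : ∀ i, X i), k + 1 ≤ k' → (∀ i, g i ∈ S i ∪ (closure (S i))ᶜ) →
      (∀ i, i < k → g i = f i) →
      ∃ y, y ∈ A ∧ (∀ i, i < k' → y i = g i) ∧
        (∀ i, k' ≤ i → y i ∈ S i ∪ (closure (S i))ᶜ) := by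
    intro k' g h1 h2 h3
    obtain ⟨y, hyA, hy⟩ := hcon k' g h1 h2 h3
    exact ⟨y, hyA, hy.1, hy.2⟩
  -- the point a : extends f↾k with a k = s k ∈ S k
  set f₁ : ∀ i, X i := fun i => if i < k then f i else s i with hf₁
  have hf₁V : ∀ i, f₁ i ∈ S i ∪ (closure (S i))ᶜ := by
    intro i
    by_cases h : i < k
    · simpa [hf₁, h] using hf i
    · simpa [hf₁, h] using Or.inl (hs i)
  obtain ⟨a, haA, halt, hage⟩ :=
    hcon' (k + 1) f₁ le_rfl hf₁V (fun i hi => by simp [hf₁, hi])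
  have hak : a k = s k := by
    have := halt k (Nat.lt_succ_self k)
    simpa [hf₁] using this
  have haV : ∀ i, a i ∈ S i ∪ (closure (S i))ᶜ := by
    intro i
    by_cases h : i < k + 1
    · rw [halt i h]; exact hf₁V i
    · exact hage i (le_of_not_gt h)
  -- the set of "bad at coordinate k" points of A
  set D : Set (∀ i, X i) := {d | d ∈ A ∧ d k ∉ S k} with hD
  have hDA : D ⊆ A := fun d hd => hd.1
  -- a is in the closure of D
  have haclD : a ∈ closure D := by
    rw [mem_closure_iff]
    intro O hO haO
    obtain ⟨I, u, hu, hsub⟩ := isOpen_pi_iff.1 hO a haO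
    set W : Set (X k) := if h : k ∈ I then u k else univ with hW
    have hWopen : IsOpen W := by
      by_cases h : k ∈ I
      · simpa [hW, h] using (hu k h).1
      · simp [hW, h]
    have haW : a k ∈ W := by
      by_cases h : k ∈ I
      · simpa [hW, h] using (hu k h).2
      · simp [hW, h]
    -- find t ∈ W outside closure (S k)
    have hex : ∃ t, t ∈ W ∧ t ∉ closure (S k) := by
      by_contra ht
      push_neg at ht
      have hWsub : W ⊆ closure (S k) := fun t htW => ht t htW
      have : a k ∈ interior (closure (S k)) :=
        interior_maximal hWsub hWopen haW
      rw [hnwd k] at this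
      exact this
    obtain ⟨t, htW, htc⟩ := hex
    set m : ℕ := max (k + 1) ((I.sup id) + 1) with hm
    set g : ∀ i, X i := Function.update a k t with hg
    have hgk : g k = t := by simp [hg]
    have hgne : ∀ i, i ≠ k → g i = a i := by
      intro i hik
      simp [hg, Function.update_of_ne hik]
    have hgV : ∀ i, g i ∈ S i ∪ (closure (S i))ᶜ := by
      intro i
      by_cases h : i = k
      · subst h; rw [hgk]; exact Or.inr htc
      · rw [hgne i h]; exact haV i
    have hgf : ∀ i, i < k → g i = f i := by
      intro i hi
      have hik : i ≠ k := Nat.ne_of_lt hi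
      have : a i = f i := by
        rw [halt i (Nat.lt_succ_of_lt hi)]; simp [hf₁, hi]
      rw [hgne i hik, this]
    obtain ⟨d, hdA, hdlt, hdge⟩ := hcon' m g (le_max_left _ _) hgV hgf
    refine ⟨d, ?_, hdA, ?_⟩
    · -- d ∈ O
      apply hsub
      intro i hi
      have him : i < m := by
        have h1 : i ≤ I.sup id := Finset.le_sup (f := id) hi
        exact lt_of_lt_of_le (Nat.lt_succ_of_le h1) (le_max_right _ _)
      rw [hdlt i him]
      by_cases hik : i = k
      · subst hik
        rw [hgk]
        have hiI : i ∈ I := hi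
        have : W = u i := by simp [hW, hiI]
        rw [← this]
        exact htW
      · rw [hgne i hik]
        exact (hu i hi).2
    · -- d k ∉ S k
      have hkm : k < m := lt_of_lt_of_le (Nat.lt_succ_self k) (le_max_left _ _)
      have hdk : d k = t := by rw [hdlt k hkm, hgk]
      rw [hdk]
      exact fun hmem => htc (subset_closure hmem)
  -- apply countable tightness inside the subspace A
  have hzcl : (⟨a, haA⟩ : ↥A) ∈ closure (Subtype.val ⁻¹' D) := by
    rw [closure_subtype]
    have himg : (Subtype.val '' (Subtype.val ⁻¹' D) : Set (∀ i, X i)) = A ∩ D :=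
      Subtype.image_preimage_coe A D
    rw [himg, inter_eq_self_of_subset_right hDA]
    exact haclD
  obtain ⟨B', hB'sub, hB'c, hB'cl⟩ := hA (Subtype.val ⁻¹' D) ⟨a, haA⟩ hzcl
  set B : Set (∀ i, X i) := Subtype.val '' B' with hB
  have hBD : B ⊆ D := by
    intro b hb
    obtain ⟨b', hb', rfl⟩ := hb
    exact hB'sub hb'
  have hBc : B.Countable := hB'c.image _
  have haclB : a ∈ closure B := by
    rw [closure_subtype] at hB'cl
    exact hB'cl
  -- contradiction with the weak P property at coordinate k
  set T : Set (X k) := (fun d => d k) '' B with hT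
  have hTc : T.Countable := hBc.image _
  have hTsub : T ⊆ (S k)ᶜ := by
    rintro _ ⟨d, hd, rfl⟩
    exact (hBD hd).2
  have hdis := (hwp k).2 T hTsub hTc
  have hakT : a k ∉ closure T := by
    intro h
    have : a k ∈ closure T ∩ S k := ⟨h, hak ▸ hs k⟩
    rw [hdis] at this
    exact this
  rw [mem_closure_iff] at haclB
  obtain ⟨b, hbO, hbB⟩ := haclB ((fun y => y k) ⁻¹' (closure T)ᶜ)
    (isClosed_closure.isOpen_compl.preimage (continuous_apply k)) hakT
  exact hbO (subset_closure (mem_image_of_mem _ hbB))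

theorem stmt_14 (X : ℕ → Type*) [∀ i, TopologicalSpace (X i)]
    (S : ∀ i, Set (X i)) (hnwd : ∀ i, IsNowhereDense (S i))
    (hwp : ∀ i, IsWeakPSet (S i))
    (A : ℕ → Set (∀ i, X i)) (hct : ∀ n, CountablyTight ↥(A n)) :
    ∃ x : ∀ i, X i, ∀ n, x ∉ A n := by
  classical
  choose s hs using fun i => (hwp i).1
  -- type of "finite conditions": a length and a total function with values in V
  let T := {p : ℕ × (∀ i, X i) // ∀ i, p.2 i ∈ S i ∪ (closure (S i))ᶜ}
  have hstep : ∀ (n : ℕ) (p : T), ∃ q : T, p.1.1 + 1 ≤ q.1.1 ∧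
      (∀ i, i < p.1.1 → q.1.2 i = p.1.2 i) ∧
      A n ∩ {y | (∀ i, i < q.1.1 → y i = q.1.2 i) ∧
        ∀ i, q.1.1 ≤ i → y i ∈ S i ∪ (closure (S i))ᶜ} = ∅ := by
    intro n p
    obtain ⟨k', g, h1, h2, h3, h4⟩ :=
      pi_step X S hnwd hwp s hs (A n) (hct n) p.1.1 p.1.2 p.2
    exact ⟨⟨(k', g), h2⟩, h1, h3, h4⟩
  choose next hnext1 hnext2 hnext3 using hstep
  let seq : ℕ → T := fun n =>
    Nat.rec ⟨(0, s), fun i => Or.inl (hs i)⟩ (fun n p => next n p) n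
  have hseqsucc : ∀ n, seq (n + 1) = next n (seq n) := fun n => rfl
  have hkmono : ∀ n m, n ≤ m → (seq n).1.1 ≤ (seq m).1.1 := by
    intro n m h
    induction m with
    | zero => simp [Nat.le_zero.1 h]
    | succ m ih =>
      rcases Nat.lt_or_ge n (m + 1) with h' | h'
      · have := ih (Nat.lt_succ_iff.1 h')
        calc (seq n).1.1 ≤ (seq m).1.1 := this
          _ ≤ (seq m).1.1 + 1 := Nat.le_succ _
          _ ≤ (seq (m+1)).1.1 := by rw [hseqsucc]; exact hnext1 m (seq m)
      · have : n = m + 1 := le_antisymm h h'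
        simp [this]
  have hpres : ∀ n m, n ≤ m → ∀ i, i < (seq n).1.1 → (seq m).1.2 i = (seq n).1.2 i := by
    intro n m h
    induction m with
    | zero => intro i hi; have : n = 0 := Nat.le_zero.1 h; simp [this]
    | succ m ih =>
      intro i hi
      rcases Nat.lt_or_ge n (m + 1) with h' | h'
      · have hnm : n ≤ m := Nat.lt_succ_iff.1 h'
        have him : i < (seq m).1.1 := lt_of_lt_of_le hi (hkmono n m hnm)
        have := hnext2 m (seq m) i him
        rw [hseqsucc]
        rw [this]
        exact ih hnm i hi
      · have : n = m + 1 := le_antisymm h h'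
        simp [this]
  have hkn : ∀ n, n ≤ (seq n).1.1 := by
    intro n
    induction n with
    | zero => exact Nat.zero_le _
    | succ n ih =>
      have h1 : (seq n).1.1 + 1 ≤ (seq (n+1)).1.1 := by
        rw [hseqsucc]; exact hnext1 n (seq n)
      omega
  set x : ∀ i, X i := fun i => (seq (i + 1)).1.2 i with hx
  have hxval : ∀ n i, i < (seq n).1.1 → x i = (seq n).1.2 i := by
    intro n i hi
    set N := max n (i + 1) with hN
    have h1 : (seq N).1.2 i = (seq n).1.2 i := hpres n N (le_max_left _ _) i hi
    have h2 : (seq N).1.2 i = (seq (i+1)).1.2 i := by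
      apply hpres (i+1) N (le_max_right _ _)
      exact lt_of_lt_of_le (Nat.lt_succ_self i) (hkn (i+1))
    rw [hx]
    simp only
    rw [← h2, h1]
  refine ⟨x, fun n hxA => ?_⟩
  have h4 := hnext3 n (seq n)
  have hxmem : x ∈ A n ∩ {y | (∀ i, i < (next n (seq n)).1.1 → y i = (next n (seq n)).1.2 i) ∧
      ∀ i, (next n (seq n)).1.1 ≤ i → y i ∈ S i ∪ (closure (S i))ᶜ} := by
    refine ⟨hxA, ?_, ?_⟩
    · intro i hi
      have := hxval (n+1) i (by rw [hseqsucc]; exact hi)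
      rw [this, hseqsucc]
    · intro i _
      exact (seq (i+1)).2 i
  rw [h4] at hxmem
  exact hxmem
end

section
/- Let (X_i)_{i∈I} be a family of nonempty topological spaces whose product X = ∏_{i∈I} X_i is the union of countably many countably tight subspaces. Then the set of indices i ∈ I for which X_i has a nowhere dense weak P subset is finite. -/
open Set

open Classical

private lemma generic_density {Λ : ℕ → Type*} (d : ∀ n, Λ n)
    (Cm : ℕ → Set (∀ n, Λ n)) (hcov : ∀ σ, ∃ m, σ ∈ Cm m) :
    ∃ (m : ℕ) (t : ∀ n, Λ n) (F : Finset ℕ),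
      ∀ (t' : ∀ n, Λ n) (F' : Finset ℕ), F ⊆ F' → (∀ n ∈ F, t' n = t n) →
        ∃ σ, σ ∈ Cm m ∧ ∀ n ∈ F', σ n = t' n := by
  classical
  by_contra hcon
  push_neg at hcon
  choose T Fn h1 h2 h3 using hcon
  let u : ℕ → (∀ n, Λ n) × Finset ℕ :=
    fun m => Nat.rec (d, ∅) (fun m p => (T m p.1 p.2, Fn m p.1 p.2)) m
  have hu : ∀ m, u (m+1) = (T m (u m).1 (u m).2, Fn m (u m).1 (u m).2) := fun m => rfl
  have hstep : ∀ m, (u m).2 ⊆ (u (m+1)).2 ∧ ∀ n ∈ (u m).2, (u (m+1)).1 n = (u m).1 n := by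
    intro m
    rw [hu m]
    exact ⟨h1 m (u m).1 (u m).2, h2 m (u m).1 (u m).2⟩
  have hchain : ∀ k m, k ≤ m → (u k).2 ⊆ (u m).2 ∧ ∀ n ∈ (u k).2, (u m).1 n = (u k).1 n := by
    intro k m hkm
    induction m, hkm using Nat.le_induction with
    | base => exact ⟨subset_rfl, fun _ _ => rfl⟩
    | succ m hkm ih =>
      refine ⟨ih.1.trans (hstep m).1, fun n hn => ?_⟩
      rw [(hstep m).2 n (ih.1 hn), ih.2 n hn]
  let σ0 : ∀ n, Λ n := fun n => if h : ∃ m, n ∈ (u m).2 then (u (Nat.find h)).1 n else d n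
  have hext : ∀ m n, n ∈ (u m).2 → σ0 n = (u m).1 n := by
    intro m n hn
    have h : ∃ m, n ∈ (u m).2 := ⟨m, hn⟩
    have hle : Nat.find h ≤ m := Nat.find_min' h hn
    show (if h : ∃ m, n ∈ (u m).2 then (u (Nat.find h)).1 n else d n) = (u m).1 n
    rw [dif_pos h]
    exact ((hchain _ _ hle).2 n (Nat.find_spec h)).symm
  obtain ⟨m, hm⟩ := hcov σ0
  obtain ⟨n, hnF, hne⟩ := h3 m (u m).1 (u m).2 σ0 hm
  exact hne (hext (m+1) n hnF)

noncomputable def PtMap {I : Type*} (X : I → Type*) [∀ i, Nonempty (X i)] (f : ℕ → I)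
    {Λ : ℕ → Type*} (val : ∀ n, Λ n → X (f n)) (σ : ∀ n, Λ n) : ∀ i, X i :=
  fun i =>
    if h : ∃ n, f n = i then cast (congrArg X h.choose_spec) (val h.choose (σ h.choose))
    else Classical.arbitrary _

lemma PtMap_f {I : Type*} (X : I → Type*) [∀ i, Nonempty (X i)] {f : ℕ → I}
    (hf : Function.Injective f) {Λ : ℕ → Type*} (val : ∀ n, Λ n → X (f n))
    (σ : ∀ n, Λ n) (n : ℕ) : PtMap X f val σ (f n) = val n (σ n) := by
  have h : ∃ k, f k = f n := ⟨n, rfl⟩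
  have hch : h.choose = n := hf h.choose_spec
  unfold PtMap
  rw [dif_pos h, cast_eq_iff_heq, hch]

lemma PtMap_nf {I : Type*} (X : I → Type*) [∀ i, Nonempty (X i)] {f : ℕ → I}
    {Λ : ℕ → Type*} (val : ∀ n, Λ n → X (f n)) (σ : ∀ n, Λ n) {i : I}
    (h : ¬ ∃ n, f n = i) : PtMap X f val σ i = Classical.arbitrary _ := by
  unfold PtMap
  rw [dif_neg h]

theorem stmt_15 {I : Type*} (X : I → Type*) [∀ i, TopologicalSpace (X i)]
    [∀ i, Nonempty (X i)]
    (A : ℕ → Set (∀ i, X i)) (hct : ∀ n, CountablyTight ↥(A n))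
    (hcover : ⋃ n, A n = Set.univ) :
    {i : I | ∃ S : Set (X i), IsNowhereDense S ∧ IsWeakPSet S}.Finite := by
  classical
  by_contra hfin
  have hinf : {i : I | ∃ S : Set (X i), IsNowhereDense S ∧ IsWeakPSet S}.Infinite := hfin
  let e := Set.Infinite.natEmbedding _ hinf
  let f : ℕ → I := fun n => (e n : I)
  have hf : Function.Injective f := fun a b h => e.injective (Subtype.coe_injective h)
  have hJ : ∀ n, ∃ S : Set (X (f n)), IsNowhereDense S ∧ IsWeakPSet S := fun n => (e n).2
  choose S hnwd hwp using hJ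
  choose p hpS using fun n => (hwp n).1
  -- dense complements of closures
  have hDdense : ∀ n, Dense (closure (S n))ᶜ := fun n =>
    interior_eq_empty_iff_dense_compl.mp (hnwd n)
  have hDS : ∀ n, (closure (S n))ᶜ ⊆ (S n)ᶜ := fun n => compl_subset_compl.mpr subset_closure
  -- the alphabet and values
  have hpick : ∀ n (V : {V : Set (X (f n)) // IsOpen V ∧ p n ∈ V}),
      (V.1 ∩ (closure (S n))ᶜ).Nonempty :=
    fun n V => (hDdense n).inter_open_nonempty V.1 V.2.1 ⟨p n, V.2.2⟩
  choose dv hdv using hpick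
  let val : ∀ n, Option {V : Set (X (f n)) // IsOpen V ∧ p n ∈ V} → X (f n) :=
    fun n o => o.elim (p n) (dv n)
  let xpt := PtMap X f val
  have xf : ∀ σ n, xpt σ (f n) = val n (σ n) := fun σ n => PtMap_f X hf val σ n
  have xnf : ∀ (σ) {i}, (¬ ∃ n, f n = i) → xpt σ i = Classical.arbitrary _ :=
    fun σ _ h => PtMap_nf X val σ h
  -- genericity
  obtain ⟨m, t, F, hden⟩ := generic_density (fun n => (none : Option _))
    (fun m => {σ | xpt σ ∈ A m})
    (fun σ => by
      have : xpt σ ∈ ⋃ n, A n := by rw [hcover]; trivial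
      obtain ⟨k, hk⟩ := mem_iUnion.mp this
      exact ⟨k, hk⟩)
  obtain ⟨N, hNF⟩ := Infinite.exists_notMem_finset F
  -- the center point
  obtain ⟨σ0, hσA, hσext⟩ := hden (Function.update t N none) (insert N F) (F.subset_insert N)
    (fun n hn => Function.update_of_ne (fun hh => hNF (by rw [← hh]; exact hn)) _ _)
  have hσN : σ0 N = none := by
    rw [hσext N (Finset.mem_insert_self N F), Function.update_self]
  have hxN : xpt σ0 (f N) = p N := by
    rw [xf σ0 N, hσN]
    rfl
  have hxA : xpt σ0 ∈ A m := hσA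
  -- closure claim : the center is in the closure of (A m) ∩ {z | z (f N) ∈ D N}
  have hxcl : xpt σ0 ∈ closure (A m ∩ {z : ∀ i, X i | z (f N) ∈ (closure (S N))ᶜ}) := by
    rw [mem_closure_iff]
    intro U hU hxU
    obtain ⟨P, W, hW, hsub⟩ := isOpen_pi_iff.mp hU _ hxU
    obtain ⟨V, hVo, hpV, hVsub⟩ : ∃ V : Set (X (f N)), IsOpen V ∧ p N ∈ V ∧
        (f N ∈ P → V ⊆ W (f N)) := by
      by_cases hNP : f N ∈ P
      · refine ⟨W (f N), (hW _ hNP).1, ?_, fun _ => subset_rfl⟩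
        have h2 := (hW _ hNP).2
        rwa [hxN] at h2
      · exact ⟨univ, isOpen_univ, mem_univ _, fun h => absurd h hNP⟩
    obtain ⟨τ, hτA, hτ⟩ := hden (Function.update σ0 N (some ⟨V, hVo, hpV⟩))
      (insert N (F ∪ P.preimage f hf.injOn))
      (fun n hn => Finset.mem_insert_of_mem (Finset.mem_union_left _ hn))
      (by
        intro n hn
        have hnN : n ≠ N := fun hh => hNF (hh ▸ hn)
        rw [Function.update_of_ne hnN, hσext n (Finset.mem_insert_of_mem hn),
          Function.update_of_ne hnN])
    have hτN : τ N = some ⟨V, hVo, hpV⟩ := by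
      rw [hτ N (Finset.mem_insert_self _ _), Function.update_self]
    refine ⟨xpt τ, hsub ?_, hτA, ?_⟩
    · -- xpt τ ∈ pi P W
      rw [Set.mem_pi]
      intro i hiP
      by_cases hi : ∃ n, f n = i
      · obtain ⟨n, rfl⟩ := hi
        have hnF' : n ∈ insert N (F ∪ P.preimage f hf.injOn) :=
          Finset.mem_insert_of_mem (Finset.mem_union_right _ (Finset.mem_preimage.mpr hiP))
        rw [xf τ n]
        rcases eq_or_ne n N with rfl | hnN
        · rw [hτN]
          exact hVsub hiP (hdv n ⟨V, hVo, hpV⟩).1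
        · rw [hτ n hnF', Function.update_of_ne hnN]
          have h2 := (hW _ hiP).2
          rwa [xf σ0 n] at h2
      · rw [xnf τ hi]
        have h2 := (hW _ hiP).2
        rwa [xnf σ0 hi] at h2
    · -- coordinate in D N
      show xpt τ (f N) ∈ (closure (S N))ᶜ
      rw [xf τ N, hτN]
      exact (hdv N _).2
  -- Lemma A: contradiction via countable tightness and weak P
  let z0 : ↥(A m) := ⟨xpt σ0, hxA⟩
  let B : Set ↥(A m) := Subtype.val ⁻¹' {z : ∀ i, X i | z (f N) ∈ (closure (S N))ᶜ}
  have hz0 : z0 ∈ closure B := by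
    rw [closure_subtype]
    rw [show Subtype.val '' B = A m ∩ {z : ∀ i, X i | z (f N) ∈ (closure (S N))ᶜ} from
      Subtype.image_preimage_coe _ _]
    exact hxcl
  obtain ⟨B', hB'sub, hB'cnt, hz0'⟩ := hct m B z0 hz0
  rw [closure_subtype] at hz0'
  set T : Set (X (f N)) := (fun z : ∀ i, X i => z (f N)) '' (Subtype.val '' B') with hT
  have hTsub : T ⊆ (S N)ᶜ := by
    rintro _ ⟨z, ⟨y, hyB', rfl⟩, rfl⟩
    exact hDS N (hB'sub hyB')
  have hTcnt : T.Countable := (hB'cnt.image _).image _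
  have hdis := (hwp N).2 T hTsub hTcnt
  have hmem : p N ∈ closure T := by
    have hc : Continuous (fun z : ∀ i, X i => z (f N)) := continuous_apply _
    have h3 := image_closure_subset_closure_image hc (Set.mem_image_of_mem _ hz0')
    rwa [show (z0 : ∀ i, X i) (f N) = p N from hxN] at h3
  have : p N ∈ closure T ∩ S N := ⟨hmem, hpS N⟩
  rw [hdis] at this
  exact this
end

section
/- Let (X_i)_{i∈I} be a family of nonempty T₁ topological spaces whose product X = ∏_{i∈I} X_i is the union of countably many countably tight subspaces. Then all but finitely many of the factors X_i are countably tight. -/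
open Set

namespace Stmt16

variable {I : Type*} {X : I → Type*}

/-- State of the recursion: a current point `t`, a set of "pinned" coordinates `Pi`,
and a basic open set given by a finite coordinate set `Fs` and constraints `V`. -/
structure St (X : I → Type*) where
  t : ∀ i, X i
  Pi : Finset I
  Fs : Finset I
  V : ∀ i, Set (X i)

/-- The basic open set recorded in a state. -/
def USet (s : St X) : Set (∀ i, X i) := (s.Fs : Set I).pi s.V

/-- The "candidate set" of a state: points agreeing with `t` outside the flexible
coordinates, and taking values in `Dd i ∪ {P i}` at flexible coordinates. -/
def QSet (S : Set I) (P : ∀ i, X i) (Dd : ∀ i, Set (X i)) (s : St X) : Set (∀ i, X i) :=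
  {r | (∀ i, ¬(i ∈ S ∧ i ∉ s.Pi) → r i = s.t i) ∧
       ∀ i, i ∈ S → i ∉ s.Pi → r i ∈ Dd i ∪ {P i}}

lemma mem_USet {s : St X} {r : ∀ i, X i} :
    r ∈ USet s ↔ ∀ i ∈ s.Fs, r i ∈ s.V i := by
  simp [USet, Set.mem_pi]

variable [∀ i, TopologicalSpace (X i)]

/-- Invariants maintained by the recursion. -/
structure Inv (S : Set I) (P : ∀ i, X i) (Dd : ∀ i, Set (X i)) (s : St X) : Prop where
  iV : ∀ i, IsOpen (s.V i)
  itU : s.t ∈ USet s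
  iF : ∀ i, i ∈ S → i ∉ s.Pi → i ∉ s.Fs
  it : ∀ i, i ∉ s.Pi → s.t i = P i
  iPi : ∀ i ∈ s.Pi, i ∈ S
  i8 : ∀ i ∈ s.Pi, s.t i ∈ Dd i ∪ {P i}

/-- Relation between consecutive states, recording the guarantee obtained when
handling the `k`-th piece of the cover. -/
structure Rel (A : ℕ → Set (∀ i, X i)) (S : Set I) (P : ∀ i, X i) (Dd : ∀ i, Set (X i))
    (k : ℕ) (s s' : St X) : Prop where
  mPi : s.Pi ⊆ s'.Pi
  mt : ∀ i ∈ s.Pi, s'.t i = s.t i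
  guar : (∃ j, j ∈ S ∧ j ∉ s.Pi ∧ j ∈ s'.Pi ∧ s'.t j ∈ Dd j ∧
            USet s' ∩ A k ∩ {r | r j ∈ Dd j} = ∅) ∨
         (QSet S P Dd s ∩ A k = ∅) ∨
         (∃ j, j ∈ S ∧ j ∉ s.Pi ∧ j ∈ s'.Pi ∧ s'.t j = P j ∧
            ∀ q, q ∈ QSet S P Dd s → q ∈ A k → q j ≠ P j)

theorem step_ex {S : Set I} {P : ∀ i, X i} {Dd : ∀ i, Set (X i)} {A : ℕ → Set (∀ i, X i)}
    (hS : S.Infinite) (hP : ∀ i ∈ S, P i ∈ closure (Dd i))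
    (NW : ∀ m (q : ∀ i, X i) j, j ∈ S → q ∈ A m → q j = P j →
      q ∉ closure (A m ∩ {r | r j ∈ Dd j}))
    (k : ℕ) (s : St X) (hs : Inv S P Dd s) :
    ∃ s', Inv S P Dd s' ∧ Rel A S P Dd k s s' := by
  classical
  by_cases hB : QSet S P Dd s ∩ A k = ∅
  · exact ⟨s, hs, ⟨Finset.Subset.refl _, fun i _ => rfl, Or.inr (Or.inl hB)⟩⟩
  by_cases hA : ∃ (q : ∀ i, X i) (j : I), q ∈ QSet S P Dd s ∧ q ∈ A k ∧ j ∈ S ∧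
      j ∉ s.Pi ∧ q j = P j
  · -- Branch A: apply the no-witness hypothesis at q and coordinate j
    obtain ⟨q, j, hqQ, hqA, hjS, hjPi, hqj⟩ := hA
    have hq : q ∈ (closure (A k ∩ {r | r j ∈ Dd j}))ᶜ := NW k q j hjS hqA hqj
    obtain ⟨G, W, hGW, hsub⟩ :=
      isOpen_pi_iff.mp isClosed_closure.isOpen_compl q hq
    -- pick d ∈ Dd j compatible with the constraint at j (if any)
    have hWd : ∃ d ∈ Dd j, (j ∈ G → d ∈ W j) := by
      by_cases hjG : j ∈ G
      · obtain ⟨d, hdW, hdD⟩ := mem_closure_iff.mp (hP j hjS) (W j) (hGW j hjG).1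
          (hqj ▸ (hGW j hjG).2)
        exact ⟨d, hdD, fun _ => hdW⟩
      · obtain ⟨d, hd⟩ := closure_nonempty_iff.mp ⟨P j, hP j hjS⟩
        exact ⟨d, hd, fun h => absurd h hjG⟩
    obtain ⟨d, hdD, hdW⟩ := hWd
    set q1 : ∀ i, X i := Function.update q j d with hq1def
    have hq1G : ∀ i ∈ G, q1 i ∈ W i := by
      intro i hi
      by_cases hij : i = j
      · subst hij; rw [hq1def, Function.update_self]; exact hdW hi
      · rw [hq1def, Function.update_of_ne hij]; exact (hGW i hi).2
    set Pi' : Finset I := insert j (s.Pi ∪ G.filter (fun i => i ∈ S)) with hPi'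
    have hjPi' : j ∈ Pi' := Finset.mem_insert_self _ _
    have hPiPi' : s.Pi ⊆ Pi' := fun i hi =>
      Finset.mem_insert_of_mem (Finset.mem_union_left _ hi)
    have hGS : ∀ i, i ∈ G → i ∈ S → i ∈ Pi' := fun i hiG hiS =>
      Finset.mem_insert_of_mem (Finset.mem_union_right _ (Finset.mem_filter.mpr ⟨hiG, hiS⟩))
    set t' : ∀ i, X i := fun i => if i ∈ S ∧ i ∉ Pi' then P i else q1 i with ht'def
    set V' : ∀ i, Set (X i) := fun i => if i ∈ G then W i else univ with hV'def
    -- q1 agrees with q off j, and q agrees with s.t on pinned coordinates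
    have hq1old : ∀ i, i ∉ (↑Pi' \ ↑s.Pi : Set I) → i ≠ j → q1 i = q i := by
      intro i _ hij
      rw [hq1def, Function.update_of_ne hij]
    have ht'q1 : ∀ i, i ∈ Pi' → t' i = q1 i := by
      intro i hi
      rw [ht'def]; simp only [hi, not_true, and_false, if_false]
    have ht'pin : ∀ i ∈ s.Pi, t' i = s.t i := by
      intro i hi
      have hij : i ≠ j := fun h => hjPi (h ▸ hi)
      rw [ht'q1 i (hPiPi' hi), hq1def, Function.update_of_ne hij]
      exact hqQ.1 i (fun h => h.2 hi)
    have ht'j : t' j = d := by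
      rw [ht'q1 j hjPi', hq1def, Function.update_self]
    refine ⟨⟨t', Pi', G, V'⟩, ⟨?_, ?_, ?_, ?_, ?_, ?_⟩, ⟨hPiPi', ht'pin, ?_⟩⟩
    · intro i
      show IsOpen (V' i)
      rw [hV'def]
      by_cases hiG : i ∈ G
      · simp only [hiG, if_true]; exact (hGW i hiG).1
      · simp only [hiG, if_false]; exact isOpen_univ
    · -- itU : t' ∈ USet
      refine mem_USet.mpr ?_
      intro i hiG
      have : t' i = q1 i := by
        by_cases hiS : i ∈ S
        · exact ht'q1 i (hGS i hiG hiS)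
        · rw [ht'def]; simp only [hiS, false_and, if_false]
      show t' i ∈ V' i
      rw [hV'def]; simp only [hiG, if_true]
      rw [this]; exact hq1G i hiG
    · -- iF
      intro i hiS hiPi' hiG
      exact hiPi' (hGS i hiG hiS)
    · -- it
      intro i hiPi'
      show t' i = P i
      by_cases hiS : i ∈ S
      · rw [ht'def]; simp only [hiS, hiPi', not_false_iff, and_self, if_true]
      · have hij : i ≠ j := fun h => hiS (h ▸ hjS)
        have hiPi : i ∉ s.Pi := fun h => hiPi' (hPiPi' h)
        rw [ht'def]; simp only [hiS, false_and, if_false]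
        rw [hq1def, Function.update_of_ne hij]
        rw [hqQ.1 i (fun h => hiS h.1)]
        exact hs.it i hiPi
    · -- iPi
      intro i hi
      rcases Finset.mem_insert.mp hi with h | h
      · exact h ▸ hjS
      · rcases Finset.mem_union.mp h with h | h
        · exact hs.iPi i h
        · exact (Finset.mem_filter.mp h).2
    · -- i8
      intro i hi
      show t' i ∈ Dd i ∪ {P i}
      rw [ht'q1 i hi]
      by_cases hij : i = j
      · subst hij; rw [hq1def, Function.update_self]; exact Or.inl hdD
      · rw [hq1def, Function.update_of_ne hij]
        by_cases hiPi : i ∈ s.Pi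
        · rw [hqQ.1 i (fun h => h.2 hiPi)]; exact hs.i8 i hiPi
        · have hiS : i ∈ S := by
            rcases Finset.mem_insert.mp hi with h | h
            · exact absurd h hij
            · rcases Finset.mem_union.mp h with h | h
              · exact absurd h hiPi
              · exact (Finset.mem_filter.mp h).2
          exact hqQ.2 i hiS hiPi
    · -- guarantee A
      refine Or.inl ⟨j, hjS, hjPi, hjPi', show t' j ∈ Dd j from ht'j ▸ hdD, ?_⟩
      apply eq_empty_iff_forall_notMem.mpr
      rintro r ⟨⟨hrU, hrA⟩, hrT⟩
      have hrGW : r ∈ (G : Set I).pi W := by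
        refine Set.mem_pi.mpr ?_
        intro i hi
        have hiG : i ∈ G := hi
        have := mem_USet.mp hrU i hiG
        rw [hV'def] at this; simpa only [hiG, if_true] using this
      exact (hsub hrGW) (subset_closure ⟨hrA, hrT⟩)
  · -- Branch C
    push_neg at hA
    obtain ⟨j0, hj0⟩ := (hS.diff s.Pi.finite_toSet).nonempty
    have hj0S : j0 ∈ S := hj0.1
    have hj0Pi : j0 ∉ s.Pi := fun h => hj0.2 h
    refine ⟨⟨s.t, insert j0 s.Pi, s.Fs, s.V⟩,
      ⟨hs.iV, hs.itU, ?_, ?_, ?_, ?_⟩,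
      ⟨Finset.subset_insert _ _, fun i _ => rfl, ?_⟩⟩
    · intro i hiS hi
      exact hs.iF i hiS (fun h => hi (Finset.mem_insert_of_mem h))
    · intro i hi
      exact hs.it i (fun h => hi (Finset.mem_insert_of_mem h))
    · intro i hi
      rcases Finset.mem_insert.mp hi with h | h
      · exact h ▸ hj0S
      · exact hs.iPi i h
    · intro i hi
      rcases Finset.mem_insert.mp hi with h | h
      · subst h; rw [hs.it i hj0Pi]; exact Or.inr rfl
      · exact hs.i8 i h
    · exact Or.inr (Or.inr ⟨j0, hj0S, hj0Pi, Finset.mem_insert_self _ _,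
        hs.it j0 hj0Pi, fun q hqQ hqA => hA q j0 hqQ hqA hj0S hj0Pi⟩)

end Stmt16

theorem stmt_16 {I : Type*} (X : I → Type*) [∀ i, TopologicalSpace (X i)]
    [∀ i, Nonempty (X i)] [∀ i, T1Space (X i)]
    (A : ℕ → Set (∀ i, X i)) (hct : ∀ n, CountablyTight ↥(A n))
    (hcover : ⋃ n, A n = Set.univ) :
    {i : I | ¬ CountablyTight (X i)}.Finite := by
  classical
  by_contra hfin
  set S : Set I := {i : I | ¬ CountablyTight (X i)} with hSdef
  have hS : S.Infinite := hfin
  -- choose witnesses of non-countable-tightness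
  have hwit : ∀ i, ∃ (D : Set (X i)) (p : X i), i ∈ S →
      (p ∈ closure D ∧ ∀ B ⊆ D, B.Countable → p ∉ closure B) := by
    intro i
    by_cases hi : i ∈ S
    · have hnc : ¬ CountablyTight (X i) := hi
      rw [CountablyTight] at hnc
      push_neg at hnc
      obtain ⟨D, p, hp, hcap⟩ := hnc
      exact ⟨D, p, fun _ => ⟨hp, hcap⟩⟩
    · exact ⟨∅, Classical.arbitrary _, fun h => absurd h hi⟩
  choose Dd P hPw using hwit
  have hP : ∀ i ∈ S, P i ∈ closure (Dd i) := fun i hi => (hPw i hi).1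
  have hPcap : ∀ i ∈ S, ∀ B ⊆ Dd i, B.Countable → P i ∉ closure B :=
    fun i hi => (hPw i hi).2
  by_cases hW : ∃ (m : ℕ) (q : ∀ i, X i) (j : I), j ∈ S ∧ q ∈ A m ∧ q j = P j ∧
      q ∈ closure (A m ∩ {r | r j ∈ Dd j})
  · -- A witness exists: contradiction via countable tightness of A m
    obtain ⟨m, q, j, hjS, hqA, hqj, hqcl⟩ := hW
    set T : Set (∀ i, X i) := {r | r j ∈ Dd j} with hTdef
    have hsub : (Subtype.val '' (Subtype.val ⁻¹' T : Set ↥(A m))) = A m ∩ T :=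
      Subtype.image_preimage_coe _ _
    have hqcl' : (⟨q, hqA⟩ : ↥(A m)) ∈ closure (Subtype.val ⁻¹' T) := by
      rw [closure_subtype, hsub]; exact hqcl
    obtain ⟨B, hBsub, hBc, hqB⟩ := hct m _ _ hqcl'
    have hq2 : q ∈ closure (Subtype.val '' B) := closure_subtype.mp hqB
    have hproj : q j ∈ closure ((fun r : ∀ i, X i => r j) '' (Subtype.val '' B)) :=
      image_closure_subset_closure_image (continuous_apply j) ⟨q, hq2, rfl⟩
    have hBT : (fun r : ∀ i, X i => r j) '' (Subtype.val '' B) ⊆ Dd j := by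
      rintro _ ⟨r, ⟨x, hxB, rfl⟩, rfl⟩
      exact hBsub hxB
    exact hPcap j hjS _ hBT ((hBc.image _).image _) (hqj ▸ hproj)
  · push_neg at hW
    -- hW : no witness; run the recursion
    have NW : ∀ (m : ℕ) (q : ∀ i, X i) (j : I), j ∈ S → q ∈ A m → q j = P j →
        q ∉ closure (A m ∩ {r | r j ∈ Dd j}) := fun m q j h1 h2 h3 => hW m q j h1 h2 h3
    -- initial state
    have hs0 : Stmt16.Inv S P Dd (⟨P, ∅, ∅, fun _ => univ⟩ : Stmt16.St X) := by
      refine ⟨fun _ => isOpen_univ, ?_, ?_, fun _ _ => rfl, ?_, ?_⟩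
      · exact Stmt16.mem_USet.mpr (fun i hi => absurd hi (Finset.notMem_empty i))
      · intro i _ h; exact Finset.notMem_empty i
      · intro i hi; exact absurd hi (Finset.notMem_empty i)
      · intro i hi; exact absurd hi (Finset.notMem_empty i)
    let step : ∀ (k : ℕ) (sp : {s : Stmt16.St X // Stmt16.Inv S P Dd s}),
        {s' : Stmt16.St X // Stmt16.Inv S P Dd s' ∧ Stmt16.Rel A S P Dd k sp.1 s'} :=
      fun k sp => ⟨(Stmt16.step_ex hS hP NW k sp.1 sp.2).choose,
        (Stmt16.step_ex hS hP NW k sp.1 sp.2).choose_spec⟩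
    let seq : ℕ → {s : Stmt16.St X // Stmt16.Inv S P Dd s} :=
      fun k => Nat.rec ⟨⟨P, ∅, ∅, fun _ => univ⟩, hs0⟩
        (fun k sp => ⟨(step k sp).1, (step k sp).2.1⟩) k
    have hrel : ∀ k, Stmt16.Rel A S P Dd k (seq k).1 (seq (k+1)).1 :=
      fun k => (step k (seq k)).2.2
    -- stability
    have hstab : ∀ k m, k ≤ m → (seq k).1.Pi ⊆ (seq m).1.Pi ∧
        ∀ i ∈ (seq k).1.Pi, (seq m).1.t i = (seq k).1.t i := by
      intro k m hkm
      induction m, hkm using Nat.le_induction with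
      | base => exact ⟨Finset.Subset.refl _, fun _ _ => rfl⟩
      | succ m hkm ih =>
        exact ⟨ih.1.trans (hrel m).mPi,
          fun i hi => ((hrel m).mt i (ih.1 hi)).trans (ih.2 i hi)⟩
    -- the limit point
    set z : ∀ i, X i := fun i =>
      if h : ∃ k, i ∈ (seq k).1.Pi then (seq (Nat.find h)).1.t i else P i with hzdef
    have hzt : ∀ k i, (i ∉ S ∨ i ∈ (seq k).1.Pi) → z i = (seq k).1.t i := by
      intro k i hi
      rcases hi with hiS | hiPi
      · have hnex : ¬ ∃ m, i ∈ (seq m).1.Pi := by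
          rintro ⟨m, hm⟩; exact hiS ((seq m).2.iPi i hm)
        rw [hzdef]; simp only [dif_neg hnex]
        exact ((seq k).2.it i (fun hc => hnex ⟨k, hc⟩)).symm
      · have hex : ∃ m, i ∈ (seq m).1.Pi := ⟨k, hiPi⟩
        rw [hzdef]; simp only [dif_pos hex]
        exact ((hstab _ _ (Nat.find_min' hex hiPi)).2 i (Nat.find_spec hex)).symm
    have hzQ : ∀ k, z ∈ Stmt16.QSet S P Dd (seq k).1 := by
      intro k
      constructor
      · intro i hi
        apply hzt
        by_cases hiS : i ∈ S
        · right; by_contra h; exact hi ⟨hiS, h⟩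
        · left; exact hiS
      · intro i hiS hiPi
        by_cases hex : ∃ m, i ∈ (seq m).1.Pi
        · rw [hzdef]; simp only [dif_pos hex]
          exact (seq (Nat.find hex)).2.i8 i (Nat.find_spec hex)
        · rw [hzdef]; simp only [dif_neg hex]
          exact Or.inr rfl
    have hzU : ∀ k, z ∈ Stmt16.USet (seq k).1 := by
      intro k
      refine Stmt16.mem_USet.mpr ?_
      intro i hi'
      have heq : z i = (seq k).1.t i := by
        apply hzt
        by_cases hiS : i ∈ S
        · right; by_contra h; exact ((seq k).2.iF i hiS h) hi'
        · left; exact hiS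
      rw [heq]
      exact Stmt16.mem_USet.mp (seq k).2.itU i hi'
    -- z is in some piece, contradiction with the stage-k guarantee
    have hzA : ∃ k, z ∈ A k := by
      have : z ∈ ⋃ n, A n := by rw [hcover]; exact mem_univ z
      exact mem_iUnion.mp this
    obtain ⟨k, hk⟩ := hzA
    rcases (hrel k).guar with ⟨j, _, _, hjnew, htj, hemp⟩ | hB |
        ⟨j, _, _, hjnew, htj, hall⟩
    · have h1 : z ∈ Stmt16.USet (seq (k+1)).1 := hzU (k+1)
      have h2 : z j = (seq (k+1)).1.t j := hzt (k+1) j (Or.inr hjnew)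
      have hzT : z ∈ {r : ∀ i, X i | r j ∈ Dd j} := by
        show z j ∈ Dd j
        rw [h2]; exact htj
      have : z ∈ (∅ : Set (∀ i, X i)) := hemp ▸ ⟨⟨h1, hk⟩, hzT⟩
      exact absurd this (notMem_empty z)
    · have : z ∈ (∅ : Set (∀ i, X i)) := hB ▸ ⟨hzQ k, hk⟩
      exact absurd this (notMem_empty z)
    · exact hall z (hzQ k) hk ((hzt (k+1) j (Or.inr hjnew)).trans htj)
end

section
/- Let Y be a T₁ topological space that is not countably tight. Then there exist a subspace Z ⊆ Y and a point z ∈ Z such that the singleton {z} is a nowhere dense weak P subset of Z. -/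
open Set

theorem stmt_18 {Y : Type*} [TopologicalSpace Y] [T1Space Y]
    (h : ¬ CountablyTight Y) :
    ∃ (Z : Set Y) (z : ↥Z),
      IsNowhereDense ({z} : Set ↥Z) ∧ IsWeakPSet ({z} : Set ↥Z) := by
  simp only [CountablyTight, not_forall] at h
  obtain ⟨A, x, hxA, hno⟩ := h
  push_neg at hno
  -- x ∉ A, else B = {x} works
  have hxnA : x ∉ A := by
    intro hx
    exact hno {x} (singleton_subset_iff.mpr hx) (countable_singleton x)
      (subset_closure rfl)
  set Z : Set Y := insert x A with hZ
  refine ⟨Z, ⟨x, mem_insert x A⟩, ?_, ?_⟩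
  · -- nowhere dense
    rw [IsNowhereDense, closure_singleton]
    rw [eq_empty_iff_forall_notMem]
    rintro w hw
    rw [mem_interior_iff_mem_nhds] at hw
    have hopen : IsOpen ({(⟨x, mem_insert x A⟩ : Z)} : Set Z) := by
      rcases mem_nhds_iff.mp hw with ⟨t, hts, hto, hwt⟩
      have : t = {(⟨x, mem_insert x A⟩ : Z)} :=
        subset_antisymm hts (by simpa [mem_singleton_iff.mp (hts hwt)] using hwt)
      rwa [this] at hto
    rcases isOpen_induced_iff.mp hopen with ⟨U, hU, hUeq⟩
    have hxU : x ∈ U := by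
      have : (⟨x, mem_insert x A⟩ : Z) ∈ Subtype.val ⁻¹' U := by
        rw [hUeq]; rfl
      exact this
    have : (U ∩ A).Nonempty := by
      rw [mem_closure_iff] at hxA
      exact hxA U hU hxU
    obtain ⟨a, haU, haA⟩ := this
    have : (⟨a, mem_insert_of_mem x haA⟩ : Z) ∈ Subtype.val ⁻¹' U := haU
    rw [hUeq, mem_singleton_iff] at this
    have : a = x := congrArg Subtype.val this
    exact hxnA (this ▸ haA)
  · -- weak P set
    refine ⟨singleton_nonempty _, fun T hT hTc => ?_⟩
    rw [eq_empty_iff_forall_notMem]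
    rintro w ⟨hwcl, hw⟩
    rw [mem_singleton_iff] at hw
    subst hw
    rw [closure_subtype] at hwcl
    have hsub : Subtype.val '' T ⊆ A := by
      rintro y ⟨⟨y', hy'⟩, hyT, rfl⟩
      rcases hy' with rfl | hyA
      · exact absurd rfl (hT hyT)
      · exact hyA
    exact hno _ hsub (hTc.image _) hwcl
end

section
/- Let π : X → Y be an irreducible continuous surjection between compact Hausdorff spaces (i.e., no proper closed subset of X is mapped by π onto Y). Then for every dense ω-bounded subspace D of Y, the preimage π⁻¹(D) is a dense ω-bounded subspace of X. -/
open Set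

/-- A subset `D` of a space `X` is ω-bounded if every countable subset of `D`
has compact closure contained in `D`. -/
def OmegaBounded {X : Type*} [TopologicalSpace X] (D : Set X) : Prop :=
  ∀ C ⊆ D, C.Countable → IsCompact (closure C) ∧ closure C ⊆ D

theorem stmt_19 {X Y : Type*} [TopologicalSpace X] [CompactSpace X] [T2Space X]
    [TopologicalSpace Y] [CompactSpace Y] [T2Space Y]
    (π : X → Y) (hc : Continuous π) (hs : Function.Surjective π)
    (hirr : ∀ F : Set X, IsClosed F → F ≠ univ → π '' F ≠ univ)
    (D : Set Y) (hD : Dense D) (hwb : OmegaBounded D) :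
    Dense (π ⁻¹' D) ∧ OmegaBounded (π ⁻¹' D) := by
  constructor
  · rw [dense_iff_inter_open]
    intro U hU hUne
    by_contra h
    rw [not_nonempty_iff_eq_empty] at h
    have hF : IsClosed Uᶜ := hU.isClosed_compl
    have hFne : Uᶜ ≠ univ := by
      intro heq
      obtain ⟨x, hx⟩ := hUne
      have : x ∈ Uᶜ := heq ▸ mem_univ x
      exact this hx
    have him := hirr Uᶜ hF hFne
    have hclosed : IsClosed (π '' Uᶜ) := (hF.isCompact.image hc).isClosed
    have hVne : ((π '' Uᶜ)ᶜ).Nonempty := by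
      rwa [nonempty_compl]
    obtain ⟨y, hy⟩ := hD.inter_open_nonempty _ hclosed.isOpen_compl hVne
    obtain ⟨x, hx⟩ := hs y
    have hxU : x ∈ U := by
      by_contra hxU
      exact hy.1 ⟨x, hxU, hx⟩
    have : x ∈ U ∩ π ⁻¹' D := ⟨hxU, by simp [mem_preimage, hx, hy.2]⟩
    simp [h] at this
  · intro C hC hCc
    refine ⟨isClosed_closure.isCompact, ?_⟩
    have h1 : π '' C ⊆ D := image_subset_iff.mpr hC
    obtain ⟨hk, hsub⟩ := hwb (π '' C) h1 (hCc.image π)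
    intro x hx
    exact hsub ((image_closure_subset_closure_image hc) ⟨x, hx, rfl⟩)
end
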